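/- Let A be a smooth and structured-decomposable probabilistic circuit over variables X respecting a vtree V, with hidden state size h. Then there exists a Bayesian network G over the variables X together with latent variables Z = {Z_v : v an inner node of V}, each Z_v taking at most h values, whose directed graph is V_{v→Z_v}, such that Σ_z p_G(x, z) = p_A(x) for every assignment x of X. -/

import Mathlib

open scoped BigOperators

/-! ### Probabilistic circuits

A probabilistic circuit is a rooted DAG of leaf, sum and product nodes.  We represent the
DAG by a finite sequence of nodes; well-formedness (`PC.WF`) requires that the children of
every node have strictly smaller index, and the root is the node of largest index. -/

inductive PCNode (ι : Type) (Val : ι → Type) (N : ℕ) where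
  | leaf (v : ι) (f : Val v → ℝ)
  | sum (ch : List (Fin N × ℝ))
  | prod (ch : List (Fin N))

namespace PCNode

variable {ι : Type} {Val : ι → Type} {N : ℕ}

def children : PCNode ι Val N → List (Fin N)
  | .leaf _ _ => []
  | .sum ch => ch.map Prod.fst
  | .prod ch => ch

def childCount : PCNode ι Val N → ℕ
  | .leaf _ _ => 0
  | .sum ch => ch.length
  | .prod ch => ch.length

def isProdB : PCNode ι Val N → Bool
  | .prod _ => true
  | _ => false

end PCNode

structure PC (ι : Type) (Val : ι → Type) where
  numNodes : ℕ
  node : Fin numNodes → PCNode ι Val numNodes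

namespace PC

variable {ι : Type} {Val : ι → Type}

/-- Acyclicity: every edge goes from a larger to a strictly smaller index. -/
def WF (C : PC ι Val) : Prop :=
  ∀ i : Fin C.numNodes, ∀ j ∈ (C.node i).children, (j : ℕ) < (i : ℕ)

/-- Fuelled evaluation of a node; for a well-formed circuit, fuel `C.numNodes` always
suffices. -/
def evalFuel (C : PC ι Val) (x : ∀ i, Val i) : ℕ → Fin C.numNodes → ℝ
  | 0, _ => 0
  | k+1, i =>
    match C.node i with
    | .leaf v f => f (x v)
    | .sum ch => (ch.map fun p => p.2 * evalFuel C x k p.1).sum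
    | .prod ch => (ch.map fun j => evalFuel C x k j).prod

def nodeEval (C : PC ι Val) (x : ∀ i, Val i) (i : Fin C.numNodes) : ℝ :=
  evalFuel C x C.numNodes i

/-- The function computed by the circuit (the value of its root node). -/
def eval (C : PC ι Val) (x : ∀ i, Val i) : ℝ :=
  if h : 0 < C.numNodes then nodeEval C x ⟨C.numNodes - 1, by omega⟩ else 0

def scopeFuel [DecidableEq ι] (C : PC ι Val) : ℕ → Fin C.numNodes → Finset ι
  | 0, _ => ∅
  | k+1, i =>
    match C.node i with
    | .leaf v _ => {v}
    | .sum ch => (ch.map fun p => scopeFuel C k p.1).foldr (· ∪ ·) ∅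
    | .prod ch => (ch.map fun j => scopeFuel C k j).foldr (· ∪ ·) ∅

/-- The scope of a node: the set of variables its subcircuit depends on. -/
def scope [DecidableEq ι] (C : PC ι Val) (i : Fin C.numNodes) : Finset ι :=
  scopeFuel C C.numNodes i

def rootScope [DecidableEq ι] (C : PC ι Val) : Finset ι :=
  if h : 0 < C.numNodes then scope C ⟨C.numNodes - 1, by omega⟩ else ∅

/-- The size of a circuit: its number of edges. -/
def numEdges (C : PC ι Val) : ℕ :=
  ∑ i : Fin C.numNodes, (C.node i).childCount

def depthFuel (C : PC ι Val) : ℕ → Fin C.numNodes → ℕ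
  | 0, _ => 0
  | k+1, i =>
    match C.node i with
    | .leaf _ _ => 0
    | .sum ch => (ch.map fun p => depthFuel C k p.1 + 1).foldr max 0
    | .prod ch => (ch.map fun j => depthFuel C k j + 1).foldr max 0

/-- The depth of a circuit: the length of the longest root-to-leaf path. -/
def depth (C : PC ι Val) : ℕ :=
  if h : 0 < C.numNodes then depthFuel C C.numNodes ⟨C.numNodes - 1, by omega⟩ else 0

/-- All children of any sum node have the same scope. -/
def Smooth [DecidableEq ι] (C : PC ι Val) : Prop :=
  ∀ (i : Fin C.numNodes) (ch : List (Fin C.numNodes × ℝ)), C.node i = .sum ch →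
    ∀ p ∈ ch, ∀ q ∈ ch, scope C p.1 = scope C q.1

/-- The children of any product node have pairwise disjoint scopes. -/
def Decomposable [DecidableEq ι] (C : PC ι Val) : Prop :=
  ∀ (i : Fin C.numNodes) (ch : List (Fin C.numNodes)), C.node i = .prod ch →
    ch.Pairwise fun a b => Disjoint (scope C a) (scope C b)

/-- Sum-node weights and leaf functions are nonnegative. -/
def NonnegWeights (C : PC ι Val) : Prop :=
  (∀ (i : Fin C.numNodes) (ch : List (Fin C.numNodes × ℝ)), C.node i = .sum ch →
      ∀ p ∈ ch, 0 ≤ p.2) ∧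
  (∀ (i : Fin C.numNodes) (v : ι) (f : Val v → ℝ), C.node i = .leaf v f → ∀ a, 0 ≤ f a)

/-- The weights of every sum node sum to one. -/
def NormalizedSums (C : PC ι Val) : Prop :=
  ∀ (i : Fin C.numNodes) (ch : List (Fin C.numNodes × ℝ)), C.node i = .sum ch →
    (ch.map Prod.snd).sum = 1

/-- Every leaf computes a probability distribution over its variable. -/
def NormalizedLeaves [∀ i, Fintype (Val i)] (C : PC ι Val) : Prop :=
  ∀ (i : Fin C.numNodes) (v : ι) (f : Val v → ℝ), C.node i = .leaf v f → ∑ a, f a = 1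

/-- Sum/leaf and product nodes alternate: children of sums are products and children of
products are sums or leaves. -/
def Alternating (C : PC ι Val) : Prop :=
  (∀ (i : Fin C.numNodes) (ch : List (Fin C.numNodes × ℝ)), C.node i = .sum ch →
      ∀ p ∈ ch, (C.node p.1).isProdB = true) ∧
  (∀ (i : Fin C.numNodes) (ch : List (Fin C.numNodes)), C.node i = .prod ch →
      ∀ j ∈ ch, (C.node j).isProdB = false)

/-- For every input, at most one child of each sum node evaluates to a nonzero value. -/
def Deterministic (C : PC ι Val) : Prop :=
  ∀ (x : ∀ i, Val i) (i : Fin C.numNodes) (ch : List (Fin C.numNodes × ℝ)),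
    C.node i = .sum ch → ∀ p ∈ ch, ∀ q ∈ ch,
      nodeEval C x p.1 ≠ 0 → nodeEval C x q.1 ≠ 0 → p.1 = q.1

/-- The number of product nodes with a given scope. -/
def prodCount [DecidableEq ι] (C : PC ι Val) (S : Finset ι) : ℕ :=
  (Finset.univ.filter fun i : Fin C.numNodes =>
    (C.node i).isProdB = true ∧ scope C i = S).card

/-- The index of a product node within the product nodes sharing its scope. -/
def idxOf [DecidableEq ι] (C : PC ι Val) (i : Fin C.numNodes) : ℕ :=
  (Finset.univ.filter fun j : Fin C.numNodes =>
    (j : ℕ) < (i : ℕ) ∧ (C.node j).isProdB = true ∧ scope C j = scope C i).card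

/-- Bundle of basic "probabilistic circuit over all the variables" conditions:
well-formed DAG, nonnegative normalized weights, normalized leaves, alternation of
sum/leaf and product nodes, and the root depending on all variables. -/
def IsPCOver [DecidableEq ι] [Fintype ι] [∀ i, Fintype (Val i)] (C : PC ι Val) : Prop :=
  C.WF ∧ C.NonnegWeights ∧ C.NormalizedSums ∧ C.NormalizedLeaves ∧ C.Alternating ∧
    C.rootScope = Finset.univ

end PC

/-! ### Vtrees -/

inductive Vtree (ι : Type) where
  | leaf (x : ι)
  | node (l r : Vtree ι)
deriving DecidableEq

namespace Vtree

variable {ι : Type}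

def varsFinset [DecidableEq ι] : Vtree ι → Finset ι
  | .leaf x => {x}
  | .node l r => varsFinset l ∪ varsFinset r

def leavesList : Vtree ι → List ι
  | .leaf x => [x]
  | .node l r => leavesList l ++ leavesList r

/-- A vtree over a set `S` of variables: its leaves are in bijection with `S`. -/
def ValidOver (T : Vtree ι) (S : Set ι) : Prop :=
  T.leavesList.Nodup ∧ ∀ x : ι, x ∈ T.leavesList ↔ x ∈ S

def numNodesV : Vtree ι → ℕ
  | .leaf _ => 1
  | .node l r => numNodesV l + numNodesV r + 1

def IsChildOf (c p : Vtree ι) : Prop :=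
  match p with
  | .leaf _ => False
  | .node l r => c = l ∨ c = r

inductive IsSubtreeOf : Vtree ι → Vtree ι → Prop
  | refl (t : Vtree ι) : IsSubtreeOf t t
  | left {s l r : Vtree ι} : IsSubtreeOf s l → IsSubtreeOf s (.node l r)
  | right {s l r : Vtree ι} : IsSubtreeOf s r → IsSubtreeOf s (.node l r)

def subtreesList : Vtree ι → List (Vtree ι)
  | .leaf x => [.leaf x]
  | .node l r => .node l r :: (subtreesList l ++ subtreesList r)

def isNodeB : Vtree ι → Bool
  | .leaf _ => false
  | .node _ _ => true

/-- The inner (non-leaf) nodes of a vtree. -/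
def innerFinset [DecidableEq ι] (V : Vtree ι) : Finset (Vtree ι) :=
  (V.subtreesList.filter fun t => t.isNodeB).toFinset

def depthV : Vtree ι → ℕ
  | .leaf _ => 0
  | .node l r => max (depthV l) (depthV r) + 1

/-- The nodes of a vtree occurring at a given depth. -/
def atDepth : Vtree ι → ℕ → Set (Vtree ι)
  | t, 0 => {t}
  | .leaf _, _+1 => ∅
  | .node l r, k+1 => atDepth l k ∪ atDepth r k

theorem numNodesV_lt_of_isChildOf {c p : Vtree ι} (h : c.IsChildOf p) :
    c.numNodesV < p.numNodesV := by
  cases p with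
  | leaf x => exact h.elim
  | node l r =>
    rcases h with h | h <;> subst h <;> simp only [numNodesV] <;> omega

end Vtree

/-- The tree `V_{v → Z_v}`, viewed as a graph: vertices are the subtrees of `V`
(inner subtrees play the role of the latent variables `Z_v`, leaves the role of the
variables `X`), with edges between each node and its children. -/
def vtreeGraph {ι : Type} (V : Vtree ι) : SimpleGraph (Vtree ι) where
  Adj s t := (s.IsChildOf t ∨ t.IsChildOf s) ∧ s.IsSubtreeOf V ∧ t.IsSubtreeOf V
  symm := by
    constructor
    rintro s t ⟨h, hs, ht⟩
    exact ⟨h.symm, ht, hs⟩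
  loopless := by
    constructor
    rintro s ⟨h, -, -⟩
    rcases h with h | h <;>
      exact absurd (Vtree.numNodesV_lt_of_isChildOf h) (lt_irrefl _)

namespace PC

variable {ι : Type} {Val : ι → Type}

/-- Structured decomposability with respect to a vtree: every product node has exactly
two children, whose scopes are the variables of the two children of an inner node of the
vtree. -/
def StructuredBy [DecidableEq ι] (C : PC ι Val) (V : Vtree ι) : Prop :=
  ∀ (i : Fin C.numNodes) (ch : List (Fin C.numNodes)), C.node i = .prod ch →
    ∃ (c₁ c₂ : Fin C.numNodes) (l r : Vtree ι), ch = [c₁, c₂] ∧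
      (Vtree.node l r).IsSubtreeOf V ∧
      scope C c₁ = l.varsFinset ∧ scope C c₂ = r.varsFinset

/-- Generalized structured decomposability (for products with arbitrarily many children):
every product node decomposes the variables of some vtree node into the variables of a
family of its subtrees. -/
def StructuredByGen [DecidableEq ι] (C : PC ι Val) (V : Vtree ι) : Prop :=
  ∀ (i : Fin C.numNodes) (ch : List (Fin C.numNodes)), C.node i = .prod ch →
    ∃ u : Vtree ι, u.IsSubtreeOf V ∧
      (∀ j ∈ ch, ∃ s : Vtree ι, s.IsSubtreeOf u ∧ scope C j = s.varsFinset) ∧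
      (ch.map fun j => scope C j).foldr (· ∪ ·) ∅ = u.varsFinset

/-- The hidden state size: the maximum number of product nodes sharing the scope of an
inner vtree node. -/
def hiddenStateSize [DecidableEq ι] (C : PC ι Val) (V : Vtree ι) : ℕ :=
  V.innerFinset.sup fun t => prodCount C t.varsFinset

end PC

/-! ### Contiguity and linear vtrees (for variables `Fin n`) -/

def IsIntervalFin {n : ℕ} (S : Finset (Fin n)) : Prop :=
  ∃ a b : ℕ, ∀ i : Fin n, i ∈ S ↔ (a ≤ (i : ℕ) ∧ (i : ℕ) ≤ b)

def PC.ContiguousPC {n : ℕ} {Val : Fin n → Type} (C : PC (Fin n) Val) : Prop :=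
  ∀ i : Fin C.numNodes, IsIntervalFin (PC.scope C i)

def Vtree.ContiguousV {n : ℕ} (V : Vtree (Fin n)) : Prop :=
  ∀ t : Vtree (Fin n), t.IsSubtreeOf V → IsIntervalFin t.varsFinset

inductive Vtree.IsLinearFrom {n : ℕ} : ℕ → Vtree (Fin n) → Prop
  | single (a : ℕ) (ha : a < n) (h : a + 1 = n) : IsLinearFrom a (.leaf ⟨a, ha⟩)
  | cons (a : ℕ) (ha : a < n) (T : Vtree (Fin n)) (h : a + 1 < n) :
      IsLinearFrom (a+1) T → IsLinearFrom a (.node (.leaf ⟨a, ha⟩) T)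

/-- The (right-)linear vtree, splitting `{Xᵢ}` from `{Xᵢ₊₁, …, Xₙ}` at each level. -/
def Vtree.IsLinear {n : ℕ} (V : Vtree (Fin n)) : Prop := Vtree.IsLinearFrom 0 V

/-! ### Blocking, covers and vtree labellings -/

/-- `C` blocks all paths between `A` and `B` in the graph `G`. -/
def SimpleGraph.BlocksSets {α : Type} (G : SimpleGraph α) (C A B : Set α) : Prop :=
  ∀ ⦃a b : α⦄, a ∈ A → b ∈ B → ∀ p : G.Walk a b, ∃ c ∈ C, c ∈ p.support

/-- A valid labelling of a target vtree `W` with respect to a (tree-shaped) graph `G`,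
where the variable `i` is represented by the vertex `xv i` and `X` is the set of all
variables.  The root is labelled `∅`, each leaf is labelled by the parent (i.e. the
neighbours) of its variable, the label of every inner node covers its variables, and the
labels of the children block their variables from the other labels. -/
structure IsValidLabelling {α ι : Type} [DecidableEq ι] (G : SimpleGraph α) (xv : ι → α)
    (X : Set ι) (W : Vtree ι) (label : Vtree ι → Set α) : Prop where
  root_empty : label W = ∅
  leaf_parent : ∀ x : ι, (Vtree.leaf x).IsSubtreeOf W →
    label (.leaf x) = {p | G.Adj (xv x) p}
  covers : ∀ l r : Vtree ι, (Vtree.node l r).IsSubtreeOf W →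
    G.BlocksSets (label (.node l r))
      (xv '' ((Vtree.node l r).varsFinset : Set ι))
      (xv '' (X \ ((Vtree.node l r).varsFinset : Set ι)))
  blocks_left : ∀ l r : Vtree ι, (Vtree.node l r).IsSubtreeOf W →
    G.BlocksSets (label l) (xv '' (l.varsFinset : Set ι)) (label r ∪ label (.node l r))
  blocks_right : ∀ l r : Vtree ι, (Vtree.node l r).IsSubtreeOf W →
    G.BlocksSets (label r) (xv '' (r.varsFinset : Set ι)) (label l ∪ label (.node l r))

/-! ### The augmented circuit -/

/-- Value types for the augmented circuit: the original variables keep their values, and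
each latent variable `Z_v` (indexed by the vtree node `v`) takes natural number values. -/
@[reducible] def augVal {ι : Type} (Val : ι → Type) : ι ⊕ Vtree ι → Type
  | .inl i => Val i
  | .inr _ => ℕ

/-- Find the subtree of a vtree with the given variable set (if any). -/
def Vtree.findByVars {ι : Type} [DecidableEq ι] : Vtree ι → Finset ι → Option (Vtree ι)
  | .leaf x, S => if S = {x} then some (.leaf x) else none
  | .node l r, S =>
      if S = (Vtree.node l r).varsFinset then some (.node l r)
      else (findByVars l S).orElse fun _ => findByVars r S

/-- The augmented circuit `A_aug` of a structured circuit: each product node `t` with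
scope `X_v` gets an additional leaf child over the latent variable `Z_v`, computing the
indicator function `1[Z_v = idx(t)]`.  (Node `2*i+1` is a copy of node `i` of the original
circuit and node `2*i` is the extra indicator leaf attached to it when `i` is a product.) -/
def PC.augment {ι : Type} {Val : ι → Type} [DecidableEq ι] (C : PC ι Val) (V : Vtree ι) :
    PC (ι ⊕ Vtree ι) (augVal Val) where
  numNodes := 2 * C.numNodes
  node := fun k =>
    if hk : (k : ℕ) % 2 = 1 then
      match C.node ⟨(k : ℕ) / 2, by have := k.isLt; omega⟩ with
      | .leaf v f => .leaf (Sum.inl v) f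
      | .sum ch => .sum (ch.map fun p =>
          ((⟨2 * (p.1 : ℕ) + 1, by have := p.1.isLt; omega⟩ : Fin (2 * C.numNodes)), p.2))
      | .prod ch => .prod ((ch.map fun (j : Fin C.numNodes) =>
          (⟨2 * (j : ℕ) + 1, by have := j.isLt; omega⟩ : Fin (2 * C.numNodes))) ++
          [⟨2 * ((k : ℕ) / 2), by have := k.isLt; omega⟩])
    else
      match C.node ⟨(k : ℕ) / 2, by have := k.isLt; omega⟩ with
      | .prod _ => .leaf
          (Sum.inr ((V.findByVars (PC.scope C ⟨(k : ℕ) / 2, by have := k.isLt; omega⟩)).getD V))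
          (fun m => if m = PC.idxOf C ⟨(k : ℕ) / 2, by have := k.isLt; omega⟩ then 1 else 0)
      | _ => .leaf (Sum.inr V) (fun _ => 1)

/-- Combine an assignment of the observed variables with an assignment of the latent
variables into an assignment for the augmented circuit. -/
def augAssign {ι : Type} {Val : ι → Type} [DecidableEq ι] (V : Vtree ι) (x : ∀ i, Val i)
    (z : ∀ t ∈ V.innerFinset, ℕ) : ∀ s : ι ⊕ Vtree ι, augVal Val s :=
  fun s => match s with
  | .inl i => x i
  | .inr t => if ht : t ∈ V.innerFinset then z t ht else 0

/-- The vtree of the augmented circuit: a new leaf for `Z_v` is attached at each inner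
node `v`. -/
def Vtree.augTree {ι : Type} : Vtree ι → Vtree (ι ⊕ Vtree ι)
  | .leaf x => .leaf (.inl x)
  | .node l r => .node (.leaf (.inr (.node l r))) (.node (augTree l) (augTree r))

/-! A tree-shaped Bayesian network with graph `V_{v → Z_v}`: one latent (categorical)
variable `Z_v` per inner node `v` of the vtree `V`, whose parent is the latent of the
parent node, and one observed variable per leaf of `V`, whose parent is the latent of its
parent node.  The joint distribution factorizes into the conditional probability tables. -/
structure TreeBN (ι : Type) (Val : ι → Type) where
  /-- the (common) number of states of the latent variables -/
  states : ℕ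
  /-- distribution of the root latent variable -/
  rootDist : ℕ → ℝ
  /-- `trans v s s'` = P(Z_v = s | Z_parent(v) = s') -/
  trans : Vtree ι → ℕ → ℕ → ℝ
  /-- `leafCPT i a s'` = P(X_i = a | Z_parent(i) = s') -/
  leafCPT : (i : ι) → Val i → ℕ → ℝ

namespace TreeBN

variable {ι : Type} {Val : ι → Type}

/-- Product of the CPTs of all variables in the subtree `t` of the vtree, given that the
latent variable of the parent of `t` has state `s`. -/
def jointAux (B : TreeBN ι Val) (x : ∀ i, Val i) (z : Vtree ι → ℕ) : Vtree ι → ℕ → ℝ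
  | .leaf i, s => B.leafCPT i (x i) s
  | .node l r, s =>
      B.trans (.node l r) (z (.node l r)) s *
        jointAux B x z l (z (.node l r)) * jointAux B x z r (z (.node l r))

/-- The joint density of the Bayesian network with graph `V_{v → Z_v}`, i.e. the product
over all nodes of the conditional distribution of the node's variable given its parent's
variable. -/
def joint (B : TreeBN ι Val) (V : Vtree ι) (x : ∀ i, Val i) (z : Vtree ι → ℕ) : ℝ :=
  match V with
  | .leaf i => B.leafCPT i (x i) 0
  | .node l r =>
      B.rootDist (z (.node l r)) *
        jointAux B x z l (z (.node l r)) * jointAux B x z r (z (.node l r))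

/-- All CPTs are nonnegative, supported on `states` many latent values, and normalized:
the network is a genuine Bayesian network. -/
def Proper [∀ i, Fintype (Val i)] (B : TreeBN ι Val) (V : Vtree ι) : Prop :=
  (∀ s, 0 ≤ B.rootDist s) ∧ (∀ v s s', 0 ≤ B.trans v s s') ∧
  (∀ i a s', 0 ≤ B.leafCPT i a s') ∧
  (∑ s ∈ Finset.range B.states, B.rootDist s = 1) ∧
  (∀ s, B.states ≤ s → B.rootDist s = 0) ∧
  (∀ v : Vtree ι, v.IsSubtreeOf V → v ≠ V → v.isNodeB = true →
      ∀ s', ∑ s ∈ Finset.range B.states, B.trans v s s' = 1) ∧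
  (∀ v s s', B.states ≤ s → B.trans v s s' = 0) ∧
  (∀ (i : ι) (s' : ℕ), ∑ a, B.leafCPT i a s' = 1)

end TreeBN

section Aux

open PC Vtree

variable {ι : Type} {Val : ι → Type} [DecidableEq ι]

lemma mem_foldr_union {x : ι} : ∀ (L : List (Finset ι)),
    x ∈ L.foldr (· ∪ ·) ∅ ↔ ∃ S ∈ L, x ∈ S := by
  intro L; induction L with
  | nil => simp
  | cons a L ih => simp [ih]

lemma foldr_union_const {A : Finset ι} : ∀ (L : List (Finset ι)), L ≠ [] →
    (∀ S ∈ L, S = A) → L.foldr (· ∪ ·) ∅ = A := by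
  intro L
  induction L with
  | nil => simp
  | cons a L ih =>
    intro _ h
    have ha : a = A := h a List.mem_cons_self
    cases L with
    | nil => simp [ha]
    | cons b L' =>
      rw [List.foldr_cons, ih (by simp) (fun S hS => h S (List.mem_cons_of_mem _ hS)), ha,
        Finset.union_self]

variable {C : PC ι Val}

lemma evalFuel_stable (hWF : C.WF) (x : ∀ i, Val i) :
    ∀ (N : ℕ) (i : Fin C.numNodes), (i : ℕ) < N →
      ∀ k₁ k₂, (i : ℕ) < k₁ → (i : ℕ) < k₂ →
        C.evalFuel x k₁ i = C.evalFuel x k₂ i := by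
  intro N
  induction N with
  | zero => intro i hi; omega
  | succ N ih =>
    intro i hi k₁ k₂ h₁ h₂
    obtain ⟨m₁, rfl⟩ : ∃ m, k₁ = m + 1 := ⟨k₁ - 1, by omega⟩
    obtain ⟨m₂, rfl⟩ : ∃ m, k₂ = m + 1 := ⟨k₂ - 1, by omega⟩
    have hch : ∀ j ∈ (C.node i).children, (j : ℕ) < (i : ℕ) := hWF i
    cases hnode : C.node i with
    | leaf v f => simp only [PC.evalFuel, hnode]
    | sum ch =>
      simp only [PC.evalFuel, hnode]
      congr 1
      apply List.map_congr_left
      intro p hp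
      have hj : (p.1 : ℕ) < (i : ℕ) := by
        apply hch; rw [hnode]; exact List.mem_map_of_mem hp
      congr 1
      exact ih p.1 (by omega) m₁ m₂ (by omega) (by omega)
    | prod ch =>
      simp only [PC.evalFuel, hnode]
      congr 1
      apply List.map_congr_left
      intro j hj
      have hj' : (j : ℕ) < (i : ℕ) := by
        apply hch; rw [hnode]; exact hj
      exact ih j (by omega) m₁ m₂ (by omega) (by omega)

lemma nodeEval_eq_fuel (hWF : C.WF) (x : ∀ i, Val i) (i : Fin C.numNodes) (k : ℕ)
    (hk : (i : ℕ) < k) : C.nodeEval x i = C.evalFuel x k i :=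
  evalFuel_stable hWF x ((i : ℕ) + 1) i (by omega) _ _ i.isLt hk

lemma nodeEval_leaf (hWF : C.WF) (x : ∀ i, Val i) {i : Fin C.numNodes} {v : ι}
    {f : Val v → ℝ} (h : C.node i = .leaf v f) : C.nodeEval x i = f (x v) := by
  rw [nodeEval_eq_fuel hWF x i ((i : ℕ) + 1) (by omega)]
  simp only [PC.evalFuel, h]

lemma nodeEval_sum (hWF : C.WF) (x : ∀ i, Val i) {i : Fin C.numNodes}
    {ch : List (Fin C.numNodes × ℝ)} (h : C.node i = .sum ch) :
    C.nodeEval x i = (ch.map fun p => p.2 * C.nodeEval x p.1).sum := by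
  rw [nodeEval_eq_fuel hWF x i ((i : ℕ) + 1) (by omega)]
  simp only [PC.evalFuel, h]
  congr 1
  apply List.map_congr_left
  intro p hp
  have hj : (p.1 : ℕ) < (i : ℕ) := by
    have := hWF i p.1; rw [h] at this
    exact this (List.mem_map_of_mem hp)
  rw [← nodeEval_eq_fuel hWF x p.1 (i : ℕ) hj]

lemma nodeEval_prod (hWF : C.WF) (x : ∀ i, Val i) {i : Fin C.numNodes}
    {ch : List (Fin C.numNodes)} (h : C.node i = .prod ch) :
    C.nodeEval x i = (ch.map fun j => C.nodeEval x j).prod := by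
  rw [nodeEval_eq_fuel hWF x i ((i : ℕ) + 1) (by omega)]
  simp only [PC.evalFuel, h]
  congr 1
  apply List.map_congr_left
  intro j hj
  have hj' : (j : ℕ) < (i : ℕ) := by
    have := hWF i j; rw [h] at this; exact this hj
  rw [← nodeEval_eq_fuel hWF x j (i : ℕ) hj']

lemma scopeFuel_stable (hWF : C.WF) :
    ∀ (N : ℕ) (i : Fin C.numNodes), (i : ℕ) < N →
      ∀ k₁ k₂, (i : ℕ) < k₁ → (i : ℕ) < k₂ →
        C.scopeFuel k₁ i = C.scopeFuel k₂ i := by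
  intro N
  induction N with
  | zero => intro i hi; omega
  | succ N ih =>
    intro i hi k₁ k₂ h₁ h₂
    obtain ⟨m₁, rfl⟩ : ∃ m, k₁ = m + 1 := ⟨k₁ - 1, by omega⟩
    obtain ⟨m₂, rfl⟩ : ∃ m, k₂ = m + 1 := ⟨k₂ - 1, by omega⟩
    have hch : ∀ j ∈ (C.node i).children, (j : ℕ) < (i : ℕ) := hWF i
    cases hnode : C.node i with
    | leaf v f => simp only [PC.scopeFuel, hnode]
    | sum ch =>
      simp only [PC.scopeFuel, hnode]
      congr 1
      apply List.map_congr_left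
      intro p hp
      have hj : (p.1 : ℕ) < (i : ℕ) := by
        apply hch; rw [hnode]; exact List.mem_map_of_mem hp
      exact ih p.1 (by omega) m₁ m₂ (by omega) (by omega)
    | prod ch =>
      simp only [PC.scopeFuel, hnode]
      congr 1
      apply List.map_congr_left
      intro j hj
      have hj' : (j : ℕ) < (i : ℕ) := by
        apply hch; rw [hnode]; exact hj
      exact ih j (by omega) m₁ m₂ (by omega) (by omega)

lemma scope_eq_fuel (hWF : C.WF) (i : Fin C.numNodes) (k : ℕ)
    (hk : (i : ℕ) < k) : C.scope i = C.scopeFuel k i :=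
  scopeFuel_stable hWF ((i : ℕ) + 1) i (by omega) _ _ i.isLt hk

lemma scope_leaf (hWF : C.WF) {i : Fin C.numNodes} {v : ι}
    {f : Val v → ℝ} (h : C.node i = .leaf v f) : C.scope i = {v} := by
  rw [scope_eq_fuel hWF i ((i : ℕ) + 1) (by omega)]
  simp only [PC.scopeFuel, h]

lemma scope_sum (hWF : C.WF) {i : Fin C.numNodes}
    {ch : List (Fin C.numNodes × ℝ)} (h : C.node i = .sum ch) :
    C.scope i = ((ch.map fun p => C.scope p.1).foldr (· ∪ ·) ∅) := by
  rw [scope_eq_fuel hWF i ((i : ℕ) + 1) (by omega)]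
  simp only [PC.scopeFuel, h]
  congr 1
  apply List.map_congr_left
  intro p hp
  have hj : (p.1 : ℕ) < (i : ℕ) := by
    have := hWF i p.1; rw [h] at this
    exact this (List.mem_map_of_mem hp)
  rw [← scope_eq_fuel hWF p.1 (i : ℕ) hj]

lemma scope_prod (hWF : C.WF) {i : Fin C.numNodes}
    {ch : List (Fin C.numNodes)} (h : C.node i = .prod ch) :
    C.scope i = ((ch.map fun j => C.scope j).foldr (· ∪ ·) ∅) := by
  rw [scope_eq_fuel hWF i ((i : ℕ) + 1) (by omega)]
  simp only [PC.scopeFuel, h]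
  congr 1
  apply List.map_congr_left
  intro j hj
  have hj' : (j : ℕ) < (i : ℕ) := by
    have := hWF i j; rw [h] at this; exact this hj
  rw [← scope_eq_fuel hWF j (i : ℕ) hj']

end Aux
section Aux2

open PC Vtree

set_option linter.unusedSectionVars false

variable {ι : Type} [DecidableEq ι]

lemma varsFinset_eq_toFinset (t : Vtree ι) : t.varsFinset = t.leavesList.toFinset := by
  induction t with
  | leaf x => simp [Vtree.varsFinset, Vtree.leavesList]
  | node l r ihl ihr => simp [Vtree.varsFinset, Vtree.leavesList, ihl, ihr]

lemma varsFinset_nonempty (t : Vtree ι) : t.varsFinset.Nonempty := by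
  induction t with
  | leaf x => exact ⟨x, by simp [Vtree.varsFinset]⟩
  | node l r ihl ihr => exact ihl.mono (by simp [Vtree.varsFinset, Finset.subset_union_left])

lemma isChildOf_isSubtreeOf {c p : Vtree ι} (h : c.IsChildOf p) : c.IsSubtreeOf p := by
  cases p with
  | leaf x => exact h.elim
  | node l r =>
    rcases h with h | h
    · exact h ▸ Vtree.IsSubtreeOf.left (Vtree.IsSubtreeOf.refl _)
    · exact h ▸ Vtree.IsSubtreeOf.right (Vtree.IsSubtreeOf.refl _)

lemma isSubtreeOf_trans {a b c : Vtree ι} (hab : a.IsSubtreeOf b) (hbc : b.IsSubtreeOf c) :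
    a.IsSubtreeOf c := by
  induction hbc with
  | refl => exact hab
  | left h ih => exact Vtree.IsSubtreeOf.left ih
  | right h ih => exact Vtree.IsSubtreeOf.right ih

lemma varsFinset_subset_of_subtree {s t : Vtree ι} (h : s.IsSubtreeOf t) :
    s.varsFinset ⊆ t.varsFinset := by
  induction h with
  | refl => exact subset_rfl
  | left h ih => exact ih.trans (by simp [Vtree.varsFinset, Finset.subset_union_left])
  | right h ih => exact ih.trans (by simp [Vtree.varsFinset, Finset.subset_union_right])

lemma numNodesV_le_of_subtree {s t : Vtree ι} (h : s.IsSubtreeOf t) :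
    s.numNodesV ≤ t.numNodesV := by
  induction h with
  | refl => exact le_rfl
  | left h ih => simp only [Vtree.numNodesV]; omega
  | right h ih => simp only [Vtree.numNodesV]; omega

lemma leavesList_nodup_of_subtree {s t : Vtree ι} (ht : t.leavesList.Nodup)
    (h : s.IsSubtreeOf t) : s.leavesList.Nodup := by
  induction h with
  | refl => exact ht
  | left h ih =>
    exact ih (by simpa [Vtree.leavesList] using (List.Nodup.of_append_left ht))
  | right h ih =>
    exact ih (by simpa [Vtree.leavesList] using (List.Nodup.of_append_right ht))

lemma vars_disjoint_of_nodup {l r : Vtree ι} (h : (Vtree.node l r).leavesList.Nodup) :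
    Disjoint l.varsFinset r.varsFinset := by
  rw [varsFinset_eq_toFinset, varsFinset_eq_toFinset]
  rw [Finset.disjoint_left]
  intro a hal har
  simp only [List.mem_toFinset] at hal har
  exact (List.disjoint_of_nodup_append (by simpa [Vtree.leavesList] using h)) hal har

end Aux2
section Aux3

open PC Vtree

set_option linter.unusedSectionVars false

variable {ι : Type} [DecidableEq ι]

lemma mem_subtreesList {s t : Vtree ι} : s ∈ t.subtreesList ↔ s.IsSubtreeOf t := by
  induction t with
  | leaf x =>
    simp only [Vtree.subtreesList, List.mem_singleton]
    constructor
    · rintro rfl; exact Vtree.IsSubtreeOf.refl _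
    · intro h; cases h; rfl
  | node l r ihl ihr =>
    simp only [Vtree.subtreesList, List.mem_cons, List.mem_append, ihl, ihr]
    constructor
    · rintro (rfl | h | h)
      · exact Vtree.IsSubtreeOf.refl _
      · exact Vtree.IsSubtreeOf.left h
      · exact Vtree.IsSubtreeOf.right h
    · intro h
      cases h with
      | refl => exact Or.inl rfl
      | left h => exact Or.inr (Or.inl h)
      | right h => exact Or.inr (Or.inr h)

lemma mem_innerFinset {s t : Vtree ι} :
    s ∈ t.innerFinset ↔ s.IsSubtreeOf t ∧ s.isNodeB = true := by
  simp [Vtree.innerFinset, List.mem_filter, mem_subtreesList]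

lemma innerFinset_node (l r : Vtree ι) :
    (Vtree.node l r).innerFinset = insert (Vtree.node l r) (l.innerFinset ∪ r.innerFinset) := by
  ext s
  simp only [mem_innerFinset, Finset.mem_insert, Finset.mem_union]
  constructor
  · rintro ⟨h, hn⟩
    cases h with
    | refl => exact Or.inl rfl
    | left h => exact Or.inr (Or.inl ⟨h, hn⟩)
    | right h => exact Or.inr (Or.inr ⟨h, hn⟩)
  · rintro (rfl | ⟨h, hn⟩ | ⟨h, hn⟩)
    · exact ⟨Vtree.IsSubtreeOf.refl _, rfl⟩
    · exact ⟨Vtree.IsSubtreeOf.left h, hn⟩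
    · exact ⟨Vtree.IsSubtreeOf.right h, hn⟩

lemma node_not_mem_inner (l r : Vtree ι) :
    Vtree.node l r ∉ l.innerFinset ∪ r.innerFinset := by
  intro h
  rcases Finset.mem_union.1 h with h | h <;>
  · have := numNodesV_le_of_subtree (mem_innerFinset.1 h).1
    simp only [Vtree.numNodesV] at this
    omega

lemma inner_disjoint {l r : Vtree ι} (h : (Vtree.node l r).leavesList.Nodup) :
    Disjoint l.innerFinset r.innerFinset := by
  rw [Finset.disjoint_left]
  intro s hl hr
  have h1 := varsFinset_subset_of_subtree (mem_innerFinset.1 hl).1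
  have h2 := varsFinset_subset_of_subtree (mem_innerFinset.1 hr).1
  have hd := vars_disjoint_of_nodup h
  obtain ⟨a, ha⟩ := varsFinset_nonempty s
  exact Finset.disjoint_left.1 hd (h1 ha) (h2 ha)

/-- Subtrees of a vtree with duplicate-free leaves are determined by their variable sets. -/
lemma vars_inj {V : Vtree ι} (hnd : V.leavesList.Nodup) :
    ∀ {s₁ s₂ : Vtree ι}, s₁.IsSubtreeOf V → s₂.IsSubtreeOf V →
      s₁.varsFinset = s₂.varsFinset → s₁ = s₂ := by
  induction V with
  | leaf x =>
    intro s₁ s₂ h₁ h₂ _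
    cases h₁; cases h₂; rfl
  | node l r ihl ihr =>
    intro s₁ s₂ h₁ h₂ hv
    have hndl : l.leavesList.Nodup := List.Nodup.of_append_left (by simpa [Vtree.leavesList] using hnd)
    have hndr : r.leavesList.Nodup := List.Nodup.of_append_right (by simpa [Vtree.leavesList] using hnd)
    have hd := vars_disjoint_of_nodup hnd
    have hsub : ∀ {s : Vtree ι}, s.IsSubtreeOf l → s.varsFinset ≠ (Vtree.node l r).varsFinset := by
      intro s hs he
      obtain ⟨a, ha⟩ := varsFinset_nonempty r
      have : a ∈ s.varsFinset := by
        rw [he]; simp [Vtree.varsFinset, ha]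
      exact Finset.disjoint_left.1 hd (varsFinset_subset_of_subtree hs this) ha
    have hsub' : ∀ {s : Vtree ι}, s.IsSubtreeOf r → s.varsFinset ≠ (Vtree.node l r).varsFinset := by
      intro s hs he
      obtain ⟨a, ha⟩ := varsFinset_nonempty l
      have : a ∈ s.varsFinset := by
        rw [he]; simp [Vtree.varsFinset, ha]
      exact Finset.disjoint_left.1 hd ha (varsFinset_subset_of_subtree hs this)
    have hlr : ∀ {a b : Vtree ι}, a.IsSubtreeOf l → b.IsSubtreeOf r → a.varsFinset ≠ b.varsFinset := by
      intro a b ha hb he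
      obtain ⟨c, hc⟩ := varsFinset_nonempty a
      have hcb : c ∈ b.varsFinset := he ▸ hc
      exact Finset.disjoint_left.1 hd (varsFinset_subset_of_subtree ha hc)
        (varsFinset_subset_of_subtree hb hcb)
    cases h₁ with
    | refl =>
      cases h₂ with
      | refl => rfl
      | left h => exact absurd hv.symm (hsub h)
      | right h => exact absurd hv.symm (hsub' h)
    | left h =>
      cases h₂ with
      | refl => exact absurd hv (hsub h)
      | left h' => exact ihl hndl h h' hv
      | right h' => exact absurd hv (hlr h h')
    | right h =>
      cases h₂ with
      | refl => exact absurd hv (hsub' h)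
      | left h' => exact absurd hv.symm (hlr h' h)
      | right h' => exact ihr hndr h h' hv

/-- Parent uniqueness in a vtree with duplicate-free leaves. -/
lemma parent_unique {V : Vtree ι} (hnd : V.leavesList.Nodup) :
    ∀ {v u₁ u₂ : Vtree ι}, u₁.IsSubtreeOf V → u₂.IsSubtreeOf V →
      v.IsChildOf u₁ → v.IsChildOf u₂ → u₁ = u₂ := by
  induction V with
  | leaf x =>
    intro v u₁ u₂ h₁ h₂ hc₁ hc₂
    cases h₁; cases h₂; rfl
  | node l r ihl ihr =>
    intro v u₁ u₂ h₁ h₂ hc₁ hc₂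
    have hndl : l.leavesList.Nodup := List.Nodup.of_append_left (by simpa [Vtree.leavesList] using hnd)
    have hndr : r.leavesList.Nodup := List.Nodup.of_append_right (by simpa [Vtree.leavesList] using hnd)
    have hd := vars_disjoint_of_nodup hnd
    -- if v is a child of the root and of a proper subtree of l (or r), contradiction
    have key : ∀ {u : Vtree ι}, u.IsSubtreeOf l → v.IsChildOf u → v.IsChildOf (Vtree.node l r) → False := by
      intro u hu hvu hvroot
      have hvsub : v.IsSubtreeOf u := isChildOf_isSubtreeOf hvu
      have hlt : v.numNodesV < u.numNodesV := Vtree.numNodesV_lt_of_isChildOf hvu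
      have hle : u.numNodesV ≤ l.numNodesV := numNodesV_le_of_subtree hu
      rcases hvroot with h | h
      · subst h; omega
      · subst h
        obtain ⟨a, ha⟩ := varsFinset_nonempty v
        have h1 : a ∈ l.varsFinset :=
          varsFinset_subset_of_subtree (isSubtreeOf_trans hvsub hu) ha
        exact Finset.disjoint_left.1 hd h1 ha
    have key' : ∀ {u : Vtree ι}, u.IsSubtreeOf r → v.IsChildOf u → v.IsChildOf (Vtree.node l r) → False := by
      intro u hu hvu hvroot
      have hvsub : v.IsSubtreeOf u := isChildOf_isSubtreeOf hvu
      have hlt : v.numNodesV < u.numNodesV := Vtree.numNodesV_lt_of_isChildOf hvu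
      have hle : u.numNodesV ≤ r.numNodesV := numNodesV_le_of_subtree hu
      rcases hvroot with h | h
      · subst h
        obtain ⟨a, ha⟩ := varsFinset_nonempty v
        have h1 : a ∈ r.varsFinset :=
          varsFinset_subset_of_subtree (isSubtreeOf_trans hvsub hu) ha
        exact Finset.disjoint_left.1 hd ha h1
      · subst h; omega
    have cross : ∀ {u₁ u₂ : Vtree ι}, u₁.IsSubtreeOf l → u₂.IsSubtreeOf r →
        v.IsChildOf u₁ → v.IsChildOf u₂ → False := by
      intro u₁ u₂ hu₁ hu₂ hv₁ hv₂
      obtain ⟨a, ha⟩ := varsFinset_nonempty v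
      have h1 : a ∈ l.varsFinset :=
        varsFinset_subset_of_subtree (isSubtreeOf_trans (isChildOf_isSubtreeOf hv₁) hu₁) ha
      have h2 : a ∈ r.varsFinset :=
        varsFinset_subset_of_subtree (isSubtreeOf_trans (isChildOf_isSubtreeOf hv₂) hu₂) ha
      exact Finset.disjoint_left.1 hd h1 h2
    cases h₁ with
    | refl =>
      cases h₂ with
      | refl => rfl
      | left h => exact (key h hc₂ hc₁).elim
      | right h => exact (key' h hc₂ hc₁).elim
    | left h =>
      cases h₂ with
      | refl => exact (key h hc₁ hc₂).elim
      | left h' => exact ihl hndl h h' hc₁ hc₂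
      | right h' => exact (cross h h' hc₁ hc₂).elim
    | right h =>
      cases h₂ with
      | refl => exact (key' h hc₁ hc₂).elim
      | left h' => exact (cross h' h hc₂ hc₁).elim
      | right h' => exact ihr hndr h h' hc₁ hc₂

end Aux3
section Aux4

open PC Vtree

set_option linter.unusedSectionVars false

variable {ι : Type} {Val : ι → Type} [DecidableEq ι] {C : PC ι Val}

lemma isProdB_iff {i : Fin C.numNodes} :
    (C.node i).isProdB = true ↔ ∃ ch, C.node i = .prod ch := by
  constructor
  · intro h
    cases hn : C.node i with
    | leaf v f => rw [hn] at h; simp [PCNode.isProdB] at h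
    | sum ch => rw [hn] at h; simp [PCNode.isProdB] at h
    | prod ch => exact ⟨ch, rfl⟩
  · rintro ⟨ch, h⟩; rw [h]; rfl

lemma idxOf_lt_prodCount {i : Fin C.numNodes} (h : (C.node i).isProdB = true) :
    C.idxOf i < C.prodCount (C.scope i) := by
  apply Finset.card_lt_card
  constructor
  · intro j hj
    simp only [Finset.mem_filter, Finset.mem_univ, true_and] at hj ⊢
    exact ⟨hj.2.1, hj.2.2⟩
  · intro hsub
    have hi : i ∈ Finset.univ.filter fun j : Fin C.numNodes =>
        (C.node j).isProdB = true ∧ C.scope j = C.scope i := by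
      simp [h]
    have := hsub hi
    simp only [Finset.mem_filter, Finset.mem_univ, true_and] at this
    omega

lemma idxOf_strictMono {i j : Fin C.numNodes} (hij : (i : ℕ) < (j : ℕ))
    (hi : (C.node i).isProdB = true) (hs : C.scope i = C.scope j) :
    C.idxOf i < C.idxOf j := by
  apply Finset.card_lt_card
  constructor
  · intro k hk
    simp only [Finset.mem_filter, Finset.mem_univ, true_and] at hk ⊢
    exact ⟨by omega, hk.2.1, hk.2.2.trans hs⟩
  · intro hsub
    have hi' : i ∈ Finset.univ.filter fun k : Fin C.numNodes =>
        (k : ℕ) < (j : ℕ) ∧ (C.node k).isProdB = true ∧ C.scope k = C.scope j :=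
      Finset.mem_filter.2 ⟨Finset.mem_univ _, hij, hi, hs⟩
    have := hsub hi'
    simp only [Finset.mem_filter, Finset.mem_univ, true_and] at this
    omega

lemma idxOf_inj {i j : Fin C.numNodes} (hi : (C.node i).isProdB = true)
    (hj : (C.node j).isProdB = true) (hs : C.scope i = C.scope j)
    (he : C.idxOf i = C.idxOf j) : i = j := by
  rcases lt_trichotomy (i : ℕ) (j : ℕ) with h | h | h
  · exact absurd he (Nat.ne_of_lt (idxOf_strictMono h hi hs))
  · exact Fin.ext h
  · exact absurd he.symm (Nat.ne_of_lt (idxOf_strictMono h hj hs.symm))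

lemma idxOf_surj {S : Finset ι} {s : ℕ} (hs : s < C.prodCount S) :
    ∃ t : Fin C.numNodes, (C.node t).isProdB = true ∧ C.scope t = S ∧ C.idxOf t = s := by
  classical
  set P := Finset.univ.filter fun j : Fin C.numNodes =>
    (C.node j).isProdB = true ∧ C.scope j = S with hP
  have hinj : Set.InjOn C.idxOf P := by
    intro a ha b hb hab
    simp only [hP, Finset.coe_filter, Set.mem_setOf_eq, Finset.mem_univ, true_and] at ha hb
    exact idxOf_inj ha.1 hb.1 (ha.2.trans hb.2.symm) hab
  have hmaps : ∀ a ∈ P, C.idxOf a ∈ Finset.range (C.prodCount S) := by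
    intro a ha
    simp only [hP, Finset.mem_filter, Finset.mem_univ, true_and] at ha
    rw [Finset.mem_range]
    have := idxOf_lt_prodCount (C := C) ha.1
    rwa [ha.2] at this
  have himg : P.image C.idxOf = Finset.range (C.prodCount S) := by
    apply Finset.eq_of_subset_of_card_le
    · intro a ha
      obtain ⟨b, hb, rfl⟩ := Finset.mem_image.1 ha
      exact hmaps b hb
    · rw [Finset.card_range, Finset.card_image_of_injOn hinj]
      rfl
  have : s ∈ P.image C.idxOf := by rw [himg]; exact Finset.mem_range.2 hs
  obtain ⟨t, ht, hts⟩ := Finset.mem_image.1 this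
  simp only [hP, Finset.mem_filter, Finset.mem_univ, true_and] at ht
  exact ⟨t, ht.1, ht.2, hts⟩

end Aux4
section Aux5

open PC Vtree

set_option linter.unusedSectionVars false

variable {ι : Type} {Val : ι → Type} [DecidableEq ι] {C : PC ι Val}

/-- Total weight of children with a given index, in a sum node's child list. -/
noncomputable def Wsum (C : PC ι Val) (ch : List (Fin C.numNodes × ℝ)) (s : ℕ) : ℝ :=
  (ch.map fun p => if C.idxOf p.1 = s then p.2 else 0).sum

lemma list_sum_comm {α β : Type*} (L : List α) (S : Finset β) (F : α → β → ℝ) :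
    ∑ b ∈ S, (L.map (fun a => F a b)).sum = (L.map fun a => ∑ b ∈ S, F a b).sum := by
  induction L with
  | nil => simp
  | cons a L ih => simp [Finset.sum_add_distrib, ih]

lemma Wsum_nonneg {ch : List (Fin C.numNodes × ℝ)} (h : ∀ p ∈ ch, 0 ≤ p.2) (s : ℕ) :
    0 ≤ Wsum C ch s := by
  apply List.sum_nonneg
  intro a ha
  obtain ⟨p, hp, rfl⟩ := List.mem_map.1 ha
  split
  · exact h p hp
  · exact le_rfl

lemma Wsum_mul_sum {ch : List (Fin C.numNodes × ℝ)} {m : ℕ} (g : ℕ → ℝ)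
    (h : ∀ p ∈ ch, C.idxOf p.1 < m) :
    ∑ s ∈ Finset.range m, Wsum C ch s * g s
      = (ch.map fun p => p.2 * g (C.idxOf p.1)).sum := by
  have step : ∀ s, Wsum C ch s * g s
      = (ch.map fun p => if C.idxOf p.1 = s then p.2 * g s else 0).sum := by
    intro s
    unfold Wsum
    rw [← List.sum_map_mul_right]
    congr 1
    apply List.map_congr_left
    intro p hp
    by_cases hc : C.idxOf p.1 = s <;> simp [hc]
  simp only [step]
  rw [list_sum_comm]
  congr 1
  apply List.map_congr_left
  intro p hp
  rw [Finset.sum_ite_eq (Finset.range m) (C.idxOf p.1) (fun s => p.2 * g s)]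
  rw [if_pos (Finset.mem_range.2 (h p hp))]

lemma Wsum_zero_of_ge {ch : List (Fin C.numNodes × ℝ)} {m : ℕ}
    (h : ∀ p ∈ ch, C.idxOf p.1 < m) {s : ℕ} (hs : m ≤ s) : Wsum C ch s = 0 := by
  unfold Wsum
  apply List.sum_eq_zero
  intro a ha
  obtain ⟨p, hp, rfl⟩ := List.mem_map.1 ha
  rw [if_neg]
  intro he
  have := h p hp
  omega

lemma Wsum_total {ch : List (Fin C.numNodes × ℝ)} {m : ℕ}
    (h : ∀ p ∈ ch, C.idxOf p.1 < m) :
    ∑ s ∈ Finset.range m, Wsum C ch s = (ch.map Prod.snd).sum := by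
  have := Wsum_mul_sum (C := C) (ch := ch) (m := m) (fun _ => 1) h
  simpa using this

variable {α : Type} [DecidableEq α]

/-- Sum over all assignments (with values `< st`) on a finite set `S`, of a function of
the 0-extension of the assignment. -/
noncomputable def PSsum (st : ℕ) (S : Finset α) (G : (α → ℕ) → ℝ) : ℝ :=
  ∑ z ∈ S.pi (fun _ => Finset.range st), G (fun t => if h : t ∈ S then z t h else 0)

lemma PSsum_empty (st : ℕ) (G : (α → ℕ) → ℝ) : PSsum st ∅ G = G (fun _ => 0) := by
  unfold PSsum
  rw [Finset.pi_empty, Finset.sum_singleton]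
  congr 1

lemma PSsum_congr (st : ℕ) (S : Finset α) {G₁ G₂ : (α → ℕ) → ℝ}
    (h : ∀ z, G₁ z = G₂ z) : PSsum st S G₁ = PSsum st S G₂ := by
  unfold PSsum; exact Finset.sum_congr rfl fun z _ => h _

lemma PSsum_insert {st : ℕ} {S : Finset α} {a : α} (ha : a ∉ S) (G : (α → ℕ) → ℝ) :
    PSsum st (insert a S) G
      = ∑ b ∈ Finset.range st, PSsum st S (fun f => G (Function.update f a b)) := by
  unfold PSsum
  rw [Finset.pi_insert ha]
  rw [Finset.sum_biUnion]
  · apply Finset.sum_congr rfl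
    intro b _
    rw [Finset.sum_image (fun z₁ _ z₂ _ he => Finset.Pi.cons_injective ha he)]
    apply Finset.sum_congr rfl
    intro z _
    congr 1
    funext t
    by_cases hta : t = a
    · subst hta
      rw [dif_pos (Finset.mem_insert_self t S), Finset.Pi.cons_same,
        Function.update_self]
    · rw [Function.update_of_ne hta]
      by_cases htS : t ∈ S
      · rw [dif_pos (Finset.mem_insert_of_mem htS), Finset.Pi.cons_ne (Ne.symm hta), dif_pos htS]
      · rw [dif_neg (by simp [hta, htS]), dif_neg htS]
  · intro b₁ h₁ b₂ h₂ hne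
    apply Finset.disjoint_left.2
    intro f hf₁ hf₂
    obtain ⟨z₁, _, he₁⟩ := Finset.mem_image.1 hf₁
    obtain ⟨z₂, _, he₂⟩ := Finset.mem_image.1 hf₂
    apply hne
    have hb := congrFun (congrFun (he₁.trans he₂.symm) a) (Finset.mem_insert_self a S)
    rwa [Finset.Pi.cons_same, Finset.Pi.cons_same] at hb

lemma PSsum_mul_left (st : ℕ) (S : Finset α) (c : ℝ) (G : (α → ℕ) → ℝ) :
    PSsum st S (fun z => c * G z) = c * PSsum st S G := by
  unfold PSsum; rw [Finset.mul_sum]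

lemma PSsum_union_mul {st : ℕ} {A B : Finset α} (hd : Disjoint A B)
    {G₁ G₂ : (α → ℕ) → ℝ}
    (h₁ : ∀ z₁ z₂ : α → ℕ, (∀ t ∈ A, z₁ t = z₂ t) → G₁ z₁ = G₁ z₂)
    (h₂ : ∀ z₁ z₂ : α → ℕ, (∀ t ∈ B, z₁ t = z₂ t) → G₂ z₁ = G₂ z₂) :
    PSsum st (A ∪ B) (fun z => G₁ z * G₂ z) = PSsum st A G₁ * PSsum st B G₂ := by
  classical
  induction A using Finset.induction generalizing G₁ with
  | empty =>
    rw [Finset.empty_union]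
    have hc : ∀ z : α → ℕ, G₁ z = G₁ (fun _ => 0) := fun z => h₁ z _ (by simp)
    rw [show PSsum st B (fun z => G₁ z * G₂ z)
        = PSsum st B (fun z => G₁ (fun _ => 0) * G₂ z) from
      PSsum_congr _ _ (fun z => by rw [hc z])]
    rw [PSsum_mul_left, PSsum_empty]
  | @insert a A haA ih =>
    have haB : a ∉ B := fun h => Finset.disjoint_left.1 hd (Finset.mem_insert_self a A) h
    have hdAB : Disjoint A B := Finset.disjoint_of_subset_left (Finset.subset_insert a A) hd
    have haAB : a ∉ A ∪ B := by simp [haA, haB]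
    rw [Finset.insert_union, PSsum_insert haAB, PSsum_insert haA, Finset.sum_mul]
    apply Finset.sum_congr rfl
    intro b _
    have inner : ∀ f : α → ℕ, G₂ (Function.update f a b) = G₂ f := by
      intro f
      apply h₂
      intro t ht
      exact Function.update_of_ne (fun he : t = a => haB (he ▸ ht)) _ _
    have e1 : PSsum st (A ∪ B) (fun f => G₁ (Function.update f a b) * G₂ (Function.update f a b))
        = PSsum st (A ∪ B) (fun f => G₁ (Function.update f a b) * G₂ f) :=
      PSsum_congr _ _ (fun f => by rw [inner f])
    rw [e1]
    have h₁' : ∀ z₁ z₂ : α → ℕ, (∀ t ∈ A, z₁ t = z₂ t) →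
        G₁ (Function.update z₁ a b) = G₁ (Function.update z₂ a b) := by
      intro z₁ z₂ hz
      apply h₁
      intro t ht
      rcases Finset.mem_insert.1 ht with rfl | ht'
      · rw [Function.update_self, Function.update_self]
      · rw [Function.update_of_ne (fun he : t = a => haA (he ▸ ht')) b z₁,
          Function.update_of_ne (fun he : t = a => haA (he ▸ ht')) b z₂]
        exact hz t ht'
    exact ih hdAB h₁'

end Aux5
section Aux6

open PC Vtree

set_option linter.unusedSectionVars false

variable {ι : Type} {Val : ι → Type} [DecidableEq ι]

lemma numNodesV_pos (t : Vtree ι) : 1 ≤ t.numNodesV := by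
  cases t <;> simp [Vtree.numNodesV] <;> omega

lemma innerFinset_leaf (x : ι) : (Vtree.leaf x : Vtree ι).innerFinset = ∅ := by
  simp [Vtree.innerFinset, Vtree.subtreesList, Vtree.isNodeB]

lemma children_prod {C : PC ι Val} {i : Fin C.numNodes} {ch} (h : C.node i = .prod ch) :
    (C.node i).children = ch := by rw [h]; rfl

/-- Witness predicate: `c` is the child with scope `X_v` of the product node numbered `s'`
among those with the scope of `v`'s parent. -/
def transWit (C : PC ι Val) (V : Vtree ι) (v : Vtree ι) (s' : ℕ) (c : Fin C.numNodes) : Prop :=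
  ∃ (t' : Fin C.numNodes) (u : Vtree ι), u.IsSubtreeOf V ∧ v.IsChildOf u ∧
    (C.node t').isProdB = true ∧ C.scope t' = u.varsFinset ∧ C.idxOf t' = s' ∧
    c ∈ (C.node t').children ∧ C.scope c = v.varsFinset

open Classical in
noncomputable def selNode (C : PC ι Val) (V : Vtree ι) (v : Vtree ι) (s' : ℕ) :
    Option (Fin C.numNodes) :=
  if h : ∃ c, transWit C V v s' c then some h.choose else none

noncomputable def nodeW (C : PC ι Val) (c : Fin C.numNodes) (s : ℕ) : ℝ :=
  match C.node c with
  | .sum ch => Wsum C ch s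
  | _ => if s = 0 then 1 else 0

noncomputable def transB (C : PC ι Val) (V : Vtree ι) (v : Vtree ι) (s s' : ℕ) : ℝ :=
  ((selNode C V v s').map (fun c => nodeW C c s)).getD (if s = 0 then 1 else 0)

noncomputable def leafW (C : PC ι Val) [∀ i, Fintype (Val i)] (i : ι) (a : Val i)
    (c : Fin C.numNodes) : ℝ :=
  match C.node c with
  | .leaf w f => if h : i = w then f (h ▸ a) else (Fintype.card (Val i) : ℝ)⁻¹
  | _ => (Fintype.card (Val i) : ℝ)⁻¹

noncomputable def leafB (C : PC ι Val) (V : Vtree ι) [∀ i, Fintype (Val i)] (i : ι)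
    (a : Val i) (s' : ℕ) : ℝ :=
  ((selNode C V (.leaf i) s').map (fun c => leafW C i a c)).getD (Fintype.card (Val i) : ℝ)⁻¹

noncomputable def rootB (C : PC ι Val) (i₀ : Fin C.numNodes) (s : ℕ) : ℝ :=
  match C.node i₀ with
  | .sum ch => Wsum C ch s
  | .prod _ => if C.idxOf i₀ = s then 1 else 0
  | .leaf _ _ => if s = 0 then 1 else 0

lemma nodeW_sum {C : PC ι Val} {c : Fin C.numNodes} {ch} (h : C.node c = .sum ch) (s : ℕ) :
    nodeW C c s = Wsum C ch s := by unfold nodeW; rw [h]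

lemma leafW_leaf {C : PC ι Val} [∀ i, Fintype (Val i)] {c : Fin C.numNodes} {i : ι}
    {f : Val i → ℝ} (h : C.node c = .leaf i f) (a : Val i) : leafW C i a c = f a := by
  unfold leafW; rw [h]; exact dif_pos rfl

lemma rootB_sum {C : PC ι Val} {i₀ : Fin C.numNodes} {ch} (h : C.node i₀ = .sum ch) (s : ℕ) :
    rootB C i₀ s = Wsum C ch s := by unfold rootB; rw [h]

lemma rootB_prod {C : PC ι Val} {i₀ : Fin C.numNodes} {ch} (h : C.node i₀ = .prod ch) (s : ℕ) :
    rootB C i₀ s = if C.idxOf i₀ = s then 1 else 0 := by unfold rootB; rw [h]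

/- structural lemmas under the circuit hypotheses -/

variable {C : PC ι Val} {V : Vtree ι}

lemma sum_children_scope (hWF : C.WF) (hsm : C.Smooth) (hns : C.NormalizedSums)
    {i : Fin C.numNodes} {ch} (h : C.node i = .sum ch) :
    ch ≠ [] ∧ ∀ p ∈ ch, C.scope p.1 = C.scope i := by
  have hne : ch ≠ [] := by
    intro he
    have := hns i ch h
    rw [he] at this
    simp at this
  refine ⟨hne, fun p hp => ?_⟩
  have : C.scope i = C.scope p.1 := by
    rw [scope_sum hWF h]
    apply foldr_union_const
    · simp [hne]
    · intro S hS
      obtain ⟨q, hq, rfl⟩ := List.mem_map.1 hS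
      exact hsm i ch h q hq p hp
  exact this.symm

lemma prod_info (hWF : C.WF) (hstr : C.StructuredBy V)
    {i : Fin C.numNodes} {ch} (h : C.node i = .prod ch) :
    ∃ (c₁ c₂ : Fin C.numNodes) (l r : Vtree ι), ch = [c₁, c₂] ∧
      (Vtree.node l r).IsSubtreeOf V ∧ C.scope c₁ = l.varsFinset ∧ C.scope c₂ = r.varsFinset ∧
      C.scope i = (Vtree.node l r).varsFinset := by
  obtain ⟨c₁, c₂, l, r, hche, hsub, h1, h2⟩ := hstr i ch h
  refine ⟨c₁, c₂, l, r, hche, hsub, h1, h2, ?_⟩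
  rw [scope_prod hWF h, hche]
  simp [Vtree.varsFinset, h1, h2]

lemma node_vars_two (hnd : V.leavesList.Nodup) {l r : Vtree ι}
    (h : (Vtree.node l r).IsSubtreeOf V) : 1 < (Vtree.node l r).varsFinset.card := by
  have hnd' := leavesList_nodup_of_subtree hnd h
  have hdisj := vars_disjoint_of_nodup hnd'
  obtain ⟨a, ha⟩ := varsFinset_nonempty l
  obtain ⟨b, hb⟩ := varsFinset_nonempty r
  apply Finset.one_lt_card.2
  refine ⟨a, ?_, b, ?_, ?_⟩
  · simp [Vtree.varsFinset, ha]
  · simp [Vtree.varsFinset, hb]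
  · intro he; exact Finset.disjoint_left.1 hdisj ha (he ▸ hb)

lemma prod_scope_card (hWF : C.WF) (hstr : C.StructuredBy V) (hnd : V.leavesList.Nodup)
    {i : Fin C.numNodes} {ch} (h : C.node i = .prod ch) : 1 < (C.scope i).card := by
  obtain ⟨c₁, c₂, l, r, _, hsub, _, _, hsc⟩ := prod_info hWF hstr h
  rw [hsc]; exact node_vars_two hnd hsub

lemma child_classify_sum (hWF : C.WF) {c : Fin C.numNodes}
    (hnp : (C.node c).isProdB = false) (hbig : 1 < (C.scope c).card) :
    ∃ ch, C.node c = .sum ch := by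
  cases hn : C.node c with
  | leaf v f => rw [scope_leaf hWF hn] at hbig; simp at hbig
  | sum ch => exact ⟨ch, rfl⟩
  | prod ch => rw [hn] at hnp; simp [PCNode.isProdB] at hnp

lemma child_classify_leaf (hWF : C.WF) (hsm : C.Smooth) (hns : C.NormalizedSums)
    (halt : C.Alternating) (hstr : C.StructuredBy V) (hnd : V.leavesList.Nodup)
    {c : Fin C.numNodes} {w : ι} (hnp : (C.node c).isProdB = false) (hsc : C.scope c = {w}) :
    ∃ f, C.node c = .leaf w f := by
  cases hn : C.node c with
  | leaf v f =>
    have hv : ({v} : Finset ι) = {w} := by rw [← scope_leaf hWF hn, hsc]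
    obtain rfl : v = w := Finset.singleton_injective hv
    exact ⟨f, rfl⟩
  | sum ch =>
    exfalso
    have hcs := sum_children_scope hWF hsm hns hn
    obtain ⟨p, hp⟩ := List.exists_mem_of_ne_nil ch hcs.1
    have hps : C.scope p.1 = {w} := by rw [hcs.2 p hp, hsc]
    have hprod : (C.node p.1).isProdB = true := halt.1 c ch hn p hp
    obtain ⟨ch', hch'⟩ := isProdB_iff.1 hprod
    have hb := prod_scope_card hWF hstr hnd hch'
    rw [hps] at hb
    simp at hb
  | prod ch => rw [hn] at hnp; simp [PCNode.isProdB] at hnp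

lemma transWit_unique (hWF : C.WF) (hstr : C.StructuredBy V) (hnd : V.leavesList.Nodup)
    {v : Vtree ι} {s' : ℕ} {c₁ c₂ : Fin C.numNodes}
    (h₁ : transWit C V v s' c₁) (h₂ : transWit C V v s' c₂) : c₁ = c₂ := by
  obtain ⟨t₁, u₁, hu₁, hv₁, hp₁, hs₁, hi₁, hcm₁, hsc₁⟩ := h₁
  obtain ⟨t₂, u₂, hu₂, hv₂, hp₂, hs₂, hi₂, hcm₂, hsc₂⟩ := h₂
  have huu : u₁ = u₂ := parent_unique hnd hu₁ hu₂ hv₁ hv₂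
  subst huu
  have htt : t₁ = t₂ := idxOf_inj hp₁ hp₂ (by rw [hs₁, hs₂]) (by rw [hi₁, hi₂])
  subst htt
  obtain ⟨ch, hch⟩ := isProdB_iff.1 hp₁
  obtain ⟨d₁, d₂, l', r', hche, hsubn, hd₁, hd₂⟩ := hstr t₁ ch hch
  have hchl : (C.node t₁).children = [d₁, d₂] := by rw [children_prod hch, hche]
  have hnd' : (Vtree.node l' r').leavesList.Nodup := leavesList_nodup_of_subtree hnd hsubn
  have hdisj := vars_disjoint_of_nodup hnd'
  have hne : l'.varsFinset ≠ r'.varsFinset := by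
    obtain ⟨a, ha⟩ := varsFinset_nonempty l'
    intro he
    exact Finset.disjoint_left.1 hdisj ha (he ▸ ha)
  rw [hchl] at hcm₁ hcm₂
  simp only [List.mem_cons, List.mem_singleton, List.not_mem_nil, or_false] at hcm₁ hcm₂
  rcases hcm₁ with rfl | rfl <;> rcases hcm₂ with rfl | rfl
  · rfl
  · exact ((hne (hd₁.symm.trans (hsc₁.trans (hsc₂.symm.trans hd₂))))).elim
  · exact ((hne (hd₁.symm.trans (hsc₂.trans (hsc₁.symm.trans hd₂))))).elim
  · rfl

lemma selNode_eq_some (hWF : C.WF) (hstr : C.StructuredBy V) (hnd : V.leavesList.Nodup)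
    {v : Vtree ι} {s' : ℕ} {c : Fin C.numNodes} (hc : transWit C V v s' c) :
    selNode C V v s' = some c := by
  unfold selNode
  rw [dif_pos ⟨c, hc⟩]
  exact congrArg some (transWit_unique hWF hstr hnd (Exists.choose_spec ⟨c, hc⟩) hc)

lemma selNode_spec {v : Vtree ι} {s' : ℕ} {c : Fin C.numNodes}
    (h : selNode C V v s' = some c) : transWit C V v s' c := by
  unfold selNode at h
  split at h
  · next hex =>
    simp only [Option.some.injEq] at h
    exact h ▸ hex.choose_spec
  · exact absurd h (by simp)

lemma jointAux_congr (B : TreeBN ι Val) (x : ∀ i, Val i) :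
    ∀ (v : Vtree ι) (s : ℕ) {z₁ z₂ : Vtree ι → ℕ},
      (∀ t : Vtree ι, t.IsSubtreeOf v → t.isNodeB = true → z₁ t = z₂ t) →
      B.jointAux x z₁ v s = B.jointAux x z₂ v s := by
  intro v
  induction v with
  | leaf i => intro s z₁ z₂ h; rfl
  | node l r ihl ihr =>
    intro s z₁ z₂ h
    have hz : z₁ (.node l r) = z₂ (.node l r) := h _ (Vtree.IsSubtreeOf.refl _) rfl
    simp only [TreeBN.jointAux]
    rw [hz, ihl _ (fun t ht hn2 => h t (Vtree.IsSubtreeOf.left ht) hn2),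
      ihr _ (fun t ht hn2 => h t (Vtree.IsSubtreeOf.right ht) hn2)]

end Aux6
section Aux7

open PC Vtree

set_option linter.unusedSectionVars false

variable {ι : Type} {Val : ι → Type} [DecidableEq ι] {C : PC ι Val}

lemma ite01_nonneg {s : ℕ} : (0:ℝ) ≤ if s = 0 then 1 else 0 := by split <;> norm_num

lemma nodeW_nonneg (hnw : C.NonnegWeights) (c : Fin C.numNodes) (s : ℕ) :
    0 ≤ nodeW C c s := by
  unfold nodeW
  cases hn : C.node c with
  | leaf w f => exact ite01_nonneg
  | sum ch => exact Wsum_nonneg (fun p hp => hnw.1 c ch hn p hp) s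
  | prod ch => exact ite01_nonneg

lemma transB_nonneg (hnw : C.NonnegWeights) (V v : Vtree ι) (s s' : ℕ) :
    0 ≤ transB C V v s s' := by
  unfold transB
  cases hsel : selNode C V v s' with
  | none => exact ite01_nonneg
  | some c => exact nodeW_nonneg hnw c s

lemma leafW_nonneg [∀ i, Fintype (Val i)] (hnw : C.NonnegWeights) (i : ι) (a : Val i)
    (c : Fin C.numNodes) : 0 ≤ leafW C i a c := by
  unfold leafW
  cases hn : C.node c with
  | leaf w f =>

    show (0:ℝ) ≤ if h : i = w then f (h ▸ a) else (Fintype.card (Val i) : ℝ)⁻¹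
    split
    · next h => exact hnw.2 c w f hn _
    · positivity
  | sum ch =>

    show (0:ℝ) ≤ (Fintype.card (Val i) : ℝ)⁻¹
    positivity
  | prod ch =>

    show (0:ℝ) ≤ (Fintype.card (Val i) : ℝ)⁻¹
    positivity

lemma leafB_nonneg [∀ i, Fintype (Val i)] (hnw : C.NonnegWeights) (V : Vtree ι) (i : ι)
    (a : Val i) (s' : ℕ) : 0 ≤ leafB C V i a s' := by
  unfold leafB
  cases hsel : selNode C V (Vtree.leaf i) s' with
  | none =>

    show (0:ℝ) ≤ (Fintype.card (Val i) : ℝ)⁻¹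
    positivity
  | some c => exact leafW_nonneg hnw i a c

end Aux7
/-- Let `A` be a smooth and structured-decomposable probabilistic circuit
over variables `X` respecting a vtree `V`, with hidden state size `h`.  Then there exists a
Bayesian network `G` over the variables `X` together with latent variables
`Z = {Z_v : v an inner node of V}`, each `Z_v` taking at most `h` values, whose directed
graph is `V_{v → Z_v}`, such that `Σ_z p_G(x, z) = p_A(x)` for every assignment `x` of `X`. -/
theorem statement2 {n : ℕ} (hn : 2 ≤ n) (Val : Fin n → Type)
    [∀ i, Fintype (Val i)] [∀ i, Nonempty (Val i)]
    (C : PC (Fin n) Val) (V : Vtree (Fin n)) (hV : V.ValidOver Set.univ)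
    (hpc : C.IsPCOver) (hsm : C.Smooth) (hdec : C.Decomposable) (hstr : C.StructuredBy V) :
    ∃ B : TreeBN (Fin n) Val, B.Proper V ∧ B.states ≤ C.hiddenStateSize V ∧
      ∀ x : ∀ i, Val i,
        ∑ z ∈ V.innerFinset.pi (fun _ => Finset.range B.states),
          B.joint V x (fun t => if ht : t ∈ V.innerFinset then z t ht else 0) =
        C.eval x := by
  classical
  obtain ⟨hWF, hnw, hns, hnl, halt, hroot⟩ := hpc
  have hnd : V.leavesList.Nodup := hV.1
  have hmemV : ∀ i : Fin n, i ∈ V.leavesList := fun i => (hV.2 i).2 (Set.mem_univ i)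
  have varsV : V.varsFinset = Finset.univ := by
    rw [varsFinset_eq_toFinset]
    ext i
    simp [hmemV i]
  obtain ⟨l₀, r₀, rfl⟩ : ∃ l r, V = Vtree.node l r := by
    cases V with
    | leaf w =>
      exfalso
      have h0 : (⟨0, by omega⟩ : Fin n) ∈ Vtree.leavesList (Vtree.leaf w) := hmemV _
      have h1 : (⟨1, by omega⟩ : Fin n) ∈ Vtree.leavesList (Vtree.leaf w) := hmemV _
      simp only [Vtree.leavesList, List.mem_singleton] at h0 h1
      have : (⟨0, by omega⟩ : Fin n) = (⟨1, by omega⟩ : Fin n) := h0.trans h1.symm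
      simp [Fin.ext_iff] at this
    | node l r => exact ⟨l, r, rfl⟩
  have hpos : 0 < C.numNodes := by
    rcases Nat.eq_zero_or_pos C.numNodes with h0 | h
    · exfalso
      have he : C.rootScope = ∅ := by unfold PC.rootScope; rw [dif_neg (by omega)]
      rw [hroot] at he
      have hm := Finset.mem_univ (⟨0, by omega⟩ : Fin n)
      rw [he] at hm
      exact absurd hm (Finset.notMem_empty _)
    · exact h
  set i₀ : Fin C.numNodes := ⟨C.numNodes - 1, by omega⟩ with hi₀
  have hscope₀ : C.scope i₀ = Finset.univ := by
    have h2 : C.rootScope = C.scope i₀ := by unfold PC.rootScope; rw [dif_pos hpos]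
    rw [← h2, hroot]
  have heval : ∀ x, C.eval x = C.nodeEval x i₀ := by
    intro x
    unfold PC.eval
    rw [dif_pos hpos]
  set st : ℕ := C.hiddenStateSize (Vtree.node l₀ r₀) with hstdef
  have hbound : ∀ {l r : Vtree (Fin n)}, (Vtree.node l r).IsSubtreeOf (Vtree.node l₀ r₀) →
      C.prodCount (Vtree.node l r).varsFinset ≤ st :=
    fun h => Finset.le_sup (f := fun t => C.prodCount t.varsFinset) (mem_innerFinset.2 ⟨h, rfl⟩)
  have hsc₀' : C.scope i₀ = (Vtree.node l₀ r₀).varsFinset := by rw [hscope₀, varsV]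
  have hrootnotleaf : ∀ {w : Fin n} {f : Val w → ℝ}, C.node i₀ = .leaf w f → False := by
    intro w f hr
    have h1 : ({w} : Finset (Fin n)) = Finset.univ := by rw [← scope_leaf hWF hr, hscope₀]
    have h2 := congrArg Finset.card h1
    rw [Finset.card_singleton, Finset.card_univ, Fintype.card_fin] at h2
    omega
  have hidx : ∀ {c : Fin C.numNodes} {ch : List (Fin C.numNodes × ℝ)} {l r : Vtree (Fin n)},
      C.node c = .sum ch → (Vtree.node l r).IsSubtreeOf (Vtree.node l₀ r₀) →
      C.scope c = (Vtree.node l r).varsFinset → ∀ p ∈ ch, C.idxOf p.1 < st := by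
    intro c ch l r hc hsub hsc p hp
    have hprod := halt.1 c ch hc p hp
    have hscp : C.scope p.1 = (Vtree.node l r).varsFinset := by
      rw [(sum_children_scope hWF hsm hns hc).2 p hp, hsc]
    have h1 := idxOf_lt_prodCount (C := C) hprod
    rw [hscp] at h1
    exact lt_of_lt_of_le h1 (hbound hsub)
  have hchildprod : ∀ {l r : Vtree (Fin n)}, (Vtree.node l r).IsSubtreeOf (Vtree.node l₀ r₀) →
      ∀ {t : Fin C.numNodes}, (C.node t).isProdB = true →
      C.scope t = (Vtree.node l r).varsFinset →
      ∃ d₁ d₂, (C.node t).children = [d₁, d₂] ∧ C.scope d₁ = l.varsFinset ∧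
        C.scope d₂ = r.varsFinset := by
    intro l r hsub t hprod hsc
    obtain ⟨ch, hch⟩ := isProdB_iff.1 hprod
    obtain ⟨c₁, c₂, l₂, r₂, hche, hsub₂, hd₁, hd₂, hsceq⟩ := prod_info hWF hstr hch
    have hveq : Vtree.node l₂ r₂ = Vtree.node l r :=
      vars_inj hnd hsub₂ hsub (by rw [← hsceq, hsc])
    injection hveq with e1 e2
    subst e1; subst e2
    exact ⟨c₁, c₂, by rw [children_prod hch, hche], hd₁, hd₂⟩
  have hstpos : 0 < st := by
    cases hr : C.node i₀ with
    | leaf w f => exact (hrootnotleaf hr).elim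
    | sum ch =>
      obtain ⟨p, hp⟩ := List.exists_mem_of_ne_nil ch (sum_children_scope hWF hsm hns hr).1
      have := hidx hr (Vtree.IsSubtreeOf.refl _) hsc₀' p hp
      omega
    | prod ch =>
      have hprod : (C.node i₀).isProdB = true := by rw [hr]; rfl
      have h1 := idxOf_lt_prodCount (C := C) hprod
      rw [hsc₀'] at h1
      have h2 := hbound (Vtree.IsSubtreeOf.refl _)
      omega
  set B : TreeBN (Fin n) Val :=
    ⟨st, rootB C i₀, transB C (Vtree.node l₀ r₀), leafB C (Vtree.node l₀ r₀)⟩ with hB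
  -- the pi-sum factorization step
  have PSstep : ∀ (x : ∀ i, Val i) (l r : Vtree (Fin n)),
      (Vtree.node l r).IsSubtreeOf (Vtree.node l₀ r₀) → ∀ F : ℕ → ℝ,
      PSsum st (Vtree.node l r).innerFinset
        (fun z => F (z (Vtree.node l r)) * B.jointAux x z l (z (Vtree.node l r))
          * B.jointAux x z r (z (Vtree.node l r)))
      = ∑ b ∈ Finset.range st,
          F b * (PSsum st l.innerFinset (fun z => B.jointAux x z l b)
            * PSsum st r.innerFinset (fun z => B.jointAux x z r b)) := by
    intro x l r hsub F
    have hnd' : (Vtree.node l r).leavesList.Nodup := leavesList_nodup_of_subtree hnd hsub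
    have hnm : Vtree.node l r ∉ l.innerFinset ∪ r.innerFinset := node_not_mem_inner l r
    rw [innerFinset_node, PSsum_insert hnm]
    apply Finset.sum_congr rfl
    intro b _
    have hLdep : ∀ z₁ z₂ : Vtree (Fin n) → ℕ, (∀ t ∈ l.innerFinset, z₁ t = z₂ t) →
        B.jointAux x z₁ l b = B.jointAux x z₂ l b := fun z₁ z₂ hz =>
      jointAux_congr B x l b (fun t ht hn2 => hz t (mem_innerFinset.2 ⟨ht, hn2⟩))
    have hRdep : ∀ z₁ z₂ : Vtree (Fin n) → ℕ, (∀ t ∈ r.innerFinset, z₁ t = z₂ t) →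
        B.jointAux x z₁ r b = B.jointAux x z₂ r b := fun z₁ z₂ hz =>
      jointAux_congr B x r b (fun t ht hn2 => hz t (mem_innerFinset.2 ⟨ht, hn2⟩))
    have hupd : ∀ f : Vtree (Fin n) → ℕ,
        (fun z => F (z (Vtree.node l r)) * B.jointAux x z l (z (Vtree.node l r))
          * B.jointAux x z r (z (Vtree.node l r))) (Function.update f (Vtree.node l r) b)
        = F b * (B.jointAux x f l b * B.jointAux x f r b) := by
      intro f
      simp only [Function.update_self]
      have el : B.jointAux x (Function.update f (Vtree.node l r) b) l b
          = B.jointAux x f l b := by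
        apply jointAux_congr
        intro t ht hn2
        apply Function.update_of_ne
        intro he
        have h1 := numNodesV_le_of_subtree ht
        rw [he] at h1
        simp only [Vtree.numNodesV] at h1
        have := numNodesV_pos r
        omega
      have er : B.jointAux x (Function.update f (Vtree.node l r) b) r b
          = B.jointAux x f r b := by
        apply jointAux_congr
        intro t ht hn2
        apply Function.update_of_ne
        intro he
        have h1 := numNodesV_le_of_subtree ht
        rw [he] at h1
        simp only [Vtree.numNodesV] at h1
        have := numNodesV_pos l
        omega
      rw [el, er]
      ring
    rw [PSsum_congr st (l.innerFinset ∪ r.innerFinset) hupd, PSsum_mul_left,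
      PSsum_union_mul (inner_disjoint hnd') hLdep hRdep]
  -- the sum-node evaluation step
  have sumstep : ∀ (x : ∀ i, Val i) (l r : Vtree (Fin n)),
      (Vtree.node l r).IsSubtreeOf (Vtree.node l₀ r₀) →
      ∀ (c : Fin C.numNodes) (chc : List (Fin C.numNodes × ℝ)),
      C.node c = .sum chc → C.scope c = (Vtree.node l r).varsFinset →
      (∀ (s' : ℕ) (d : Fin C.numNodes), transWit C (Vtree.node l₀ r₀) l s' d →
        PSsum st l.innerFinset (fun z => B.jointAux x z l s') = C.nodeEval x d) →
      (∀ (s' : ℕ) (d : Fin C.numNodes), transWit C (Vtree.node l₀ r₀) r s' d →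
        PSsum st r.innerFinset (fun z => B.jointAux x z r s') = C.nodeEval x d) →
      ∑ b ∈ Finset.range st,
        Wsum C chc b * (PSsum st l.innerFinset (fun z => B.jointAux x z l b)
          * PSsum st r.innerFinset (fun z => B.jointAux x z r b))
        = C.nodeEval x c := by
    intro x l r hsub c chc hchc hsc Hl Hr
    rw [Wsum_mul_sum (fun b => PSsum st l.innerFinset (fun z => B.jointAux x z l b)
      * PSsum st r.innerFinset (fun z => B.jointAux x z r b)) (hidx hchc hsub hsc)]
    rw [nodeEval_sum hWF x hchc]
    congr 1
    apply List.map_congr_left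
    intro p hp
    have hprod := halt.1 c chc hchc p hp
    have hscp : C.scope p.1 = (Vtree.node l r).varsFinset := by
      rw [(sum_children_scope hWF hsm hns hchc).2 p hp, hsc]
    obtain ⟨d₁, d₂, hdch, hd₁, hd₂⟩ := hchildprod hsub hprod hscp
    have wit₁ : transWit C (Vtree.node l₀ r₀) l (C.idxOf p.1) d₁ :=
      ⟨p.1, Vtree.node l r, hsub, Or.inl rfl, hprod, hscp, rfl, by rw [hdch]; simp, hd₁⟩
    have wit₂ : transWit C (Vtree.node l₀ r₀) r (C.idxOf p.1) d₂ :=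
      ⟨p.1, Vtree.node l r, hsub, Or.inr rfl, hprod, hscp, rfl, by rw [hdch]; simp, hd₂⟩
    rw [Hl _ _ wit₁, Hr _ _ wit₂]
    obtain ⟨chp, hchp⟩ := isProdB_iff.1 hprod
    have hche : chp = [d₁, d₂] := by rw [← children_prod hchp, hdch]
    rw [nodeEval_prod hWF x hchp, hche]
    simp [mul_assoc]
  -- the main induction
  have main : ∀ (x : ∀ i, Val i) (v : Vtree (Fin n)), v.IsSubtreeOf (Vtree.node l₀ r₀) →
      ∀ (s' : ℕ) (c : Fin C.numNodes), transWit C (Vtree.node l₀ r₀) v s' c →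
      PSsum st v.innerFinset (fun z => B.jointAux x z v s') = C.nodeEval x c := by
    intro x v
    induction v with
    | leaf i =>
      intro hsub s' c hwit
      rw [innerFinset_leaf, PSsum_empty]
      show B.leafCPT i (x i) s' = C.nodeEval x c
      have hsel := selNode_eq_some hWF hstr hnd hwit
      obtain ⟨t', u, hu, hvchild, hp', hs', hi', hcm, hscc⟩ := hwit
      obtain ⟨ch', hch'⟩ := isProdB_iff.1 hp'
      have hnp : (C.node c).isProdB = false :=
        halt.2 t' ch' hch' c (by rwa [children_prod hch'] at hcm)
      have hscl : C.scope c = {i} := by rw [hscc]; rfl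
      obtain ⟨f, hf⟩ := child_classify_leaf hWF hsm hns halt hstr hnd hnp hscl
      have hlf : B.leafCPT i (x i) s' = f (x i) := by
        show leafB C (Vtree.node l₀ r₀) i (x i) s' = f (x i)
        unfold leafB
        rw [hsel]
        simp only [Option.map_some, Option.getD_some]
        exact leafW_leaf hf (x i)
      rw [hlf, nodeEval_leaf hWF x hf]
    | node l r ihl ihr =>
      intro hsub s' c hwit
      have hsubl : l.IsSubtreeOf (Vtree.node l₀ r₀) :=
        isSubtreeOf_trans (Vtree.IsSubtreeOf.left (Vtree.IsSubtreeOf.refl l)) hsub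
      have hsubr : r.IsSubtreeOf (Vtree.node l₀ r₀) :=
        isSubtreeOf_trans (Vtree.IsSubtreeOf.right (Vtree.IsSubtreeOf.refl r)) hsub
      have hsel := selNode_eq_some hWF hstr hnd hwit
      have hscc : C.scope c = (Vtree.node l r).varsFinset := by
        obtain ⟨t', u, hu, hvchild, hp', hs', hi', hcm, hscc⟩ := hwit
        exact hscc
      have hnp : (C.node c).isProdB = false := by
        obtain ⟨t', u, hu, hvchild, hp', hs', hi', hcm, _⟩ := hwit
        obtain ⟨ch', hch'⟩ := isProdB_iff.1 hp'
        exact halt.2 t' ch' hch' c (by rwa [children_prod hch'] at hcm)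
      have hbig : 1 < (C.scope c).card := by
        rw [hscc]; exact node_vars_two hnd hsub
      obtain ⟨chc, hchc⟩ := child_classify_sum hWF hnp hbig
      have htr : ∀ b, B.trans (Vtree.node l r) b s' = Wsum C chc b := by
        intro b
        show transB C (Vtree.node l₀ r₀) (Vtree.node l r) b s' = _
        unfold transB
        rw [hsel]
        simp only [Option.map_some, Option.getD_some]
        exact nodeW_sum hchc b
      calc PSsum st (Vtree.node l r).innerFinset
            (fun z => B.jointAux x z (Vtree.node l r) s')
          = PSsum st (Vtree.node l r).innerFinset
              (fun z => B.trans (Vtree.node l r) (z (Vtree.node l r)) s'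
                * B.jointAux x z l (z (Vtree.node l r))
                * B.jointAux x z r (z (Vtree.node l r))) :=
            PSsum_congr _ _ (fun z => rfl)
        _ = ∑ b ∈ Finset.range st, B.trans (Vtree.node l r) b s'
              * (PSsum st l.innerFinset (fun z => B.jointAux x z l b)
                * PSsum st r.innerFinset (fun z => B.jointAux x z r b)) :=
            PSstep x l r hsub (fun b => B.trans (Vtree.node l r) b s')
        _ = ∑ b ∈ Finset.range st, Wsum C chc b
              * (PSsum st l.innerFinset (fun z => B.jointAux x z l b)
                * PSsum st r.innerFinset (fun z => B.jointAux x z r b)) := by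
            apply Finset.sum_congr rfl
            intro b _
            rw [htr b]
        _ = C.nodeEval x c :=
            sumstep x l r hsub c chc hchc hscc
              (fun s' d hw => ihl hsubl s' d hw) (fun s' d hw => ihr hsubr s' d hw)
  refine ⟨B, ⟨?_, ?_, ?_, ?_, ?_, ?_, ?_, ?_⟩, le_refl _, ?_⟩
  · -- rootDist nonneg
    intro s
    show 0 ≤ rootB C i₀ s
    unfold rootB
    cases hr : C.node i₀ with
    | leaf w f => exact ite01_nonneg
    | sum ch => exact Wsum_nonneg (fun p hp => hnw.1 i₀ ch hr p hp) s
    | prod ch =>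
      show (0:ℝ) ≤ if C.idxOf i₀ = s then 1 else 0
      split <;> norm_num
  · -- trans nonneg
    intro v s s'
    exact transB_nonneg hnw (Vtree.node l₀ r₀) v s s'
  · -- leafCPT nonneg
    intro i a s'
    exact leafB_nonneg hnw (Vtree.node l₀ r₀) i a s'
  · -- rootDist normalized
    show ∑ s ∈ Finset.range st, rootB C i₀ s = 1
    cases hr : C.node i₀ with
    | leaf w f => exact (hrootnotleaf hr).elim
    | sum ch =>
      rw [Finset.sum_congr rfl (fun s _ => rootB_sum hr s)]
      rw [Wsum_total (hidx hr (Vtree.IsSubtreeOf.refl _) hsc₀')]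
      exact hns i₀ ch hr
    | prod ch =>
      rw [Finset.sum_congr rfl (fun s _ => rootB_prod hr s)]
      rw [Finset.sum_ite_eq (Finset.range st) (C.idxOf i₀) (fun _ => (1:ℝ))]
      rw [if_pos]
      rw [Finset.mem_range]
      have hprod : (C.node i₀).isProdB = true := by rw [hr]; rfl
      have h1 := idxOf_lt_prodCount (C := C) hprod
      rw [hsc₀'] at h1
      exact lt_of_lt_of_le h1 (hbound (Vtree.IsSubtreeOf.refl _))
  · -- rootDist zero beyond st
    intro s hs
    have hs2 : st ≤ s := hs
    show rootB C i₀ s = 0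
    cases hr : C.node i₀ with
    | leaf w f => exact (hrootnotleaf hr).elim
    | sum ch =>
      rw [rootB_sum hr]
      exact Wsum_zero_of_ge (hidx hr (Vtree.IsSubtreeOf.refl _) hsc₀') hs
    | prod ch =>
      rw [rootB_prod hr]
      rw [if_neg]
      have hprod : (C.node i₀).isProdB = true := by rw [hr]; rfl
      have h1 := idxOf_lt_prodCount (C := C) hprod
      rw [hsc₀'] at h1
      have h2 := hbound (Vtree.IsSubtreeOf.refl _)
      omega
  · -- trans normalized at inner proper subtrees
    intro v hvsub hvne hvinner s'
    show ∑ s ∈ Finset.range st, transB C (Vtree.node l₀ r₀) v s s' = 1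
    unfold transB
    cases hsel : selNode C (Vtree.node l₀ r₀) v s' with
    | none =>
      simp only [Option.map_none, Option.getD_none]
      rw [Finset.sum_ite_eq' (Finset.range st) 0 (fun _ => (1:ℝ))]
      rw [if_pos (Finset.mem_range.2 hstpos)]
    | some c =>
      simp only [Option.map_some, Option.getD_some]
      have wit := selNode_spec hsel
      obtain ⟨t', u, hu, hvchild, hp', hs', hi', hcm, hscc⟩ := wit
      unfold nodeW
      cases hnc : C.node c with
      | sum ch =>
        show ∑ s ∈ Finset.range st, Wsum C ch s = 1
        cases v with
        | leaf w => simp [Vtree.isNodeB] at hvinner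
        | node a b =>
          rw [Wsum_total (hidx hnc hvsub hscc)]
          exact hns c ch hnc
      | leaf w f =>
        show ∑ s ∈ Finset.range st, (if s = 0 then (1:ℝ) else 0) = 1
        rw [Finset.sum_ite_eq' (Finset.range st) 0 (fun _ => (1:ℝ))]
        rw [if_pos (Finset.mem_range.2 hstpos)]
      | prod ch =>
        show ∑ s ∈ Finset.range st, (if s = 0 then (1:ℝ) else 0) = 1
        rw [Finset.sum_ite_eq' (Finset.range st) 0 (fun _ => (1:ℝ))]
        rw [if_pos (Finset.mem_range.2 hstpos)]
  · -- trans zero beyond st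
    intro v s s' hs
    have hs2 : st ≤ s := hs
    show transB C (Vtree.node l₀ r₀) v s s' = 0
    unfold transB
    cases hsel : selNode C (Vtree.node l₀ r₀) v s' with
    | none =>
      simp only [Option.map_none, Option.getD_none]
      rw [if_neg (by omega)]
    | some c =>
      simp only [Option.map_some, Option.getD_some]
      have wit := selNode_spec hsel
      obtain ⟨t', u, hu, hvchild, hp', hs', hi', hcm, hscc⟩ := wit
      unfold nodeW
      cases hnc : C.node c with
      | sum ch =>
        show Wsum C ch s = 0
        apply Wsum_zero_of_ge ?_ hs
        intro p hp
        have hprod := halt.1 c ch hnc p hp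
        have hscp : C.scope p.1 = v.varsFinset := by
          rw [(sum_children_scope hWF hsm hns hnc).2 p hp, hscc]
        obtain ⟨chp, hchp⟩ := isProdB_iff.1 hprod
        obtain ⟨c₁, c₂, l₂, r₂, _, hsub₂, _, _, hsceq⟩ := prod_info hWF hstr hchp
        have hvsub : v.IsSubtreeOf (Vtree.node l₀ r₀) :=
          isSubtreeOf_trans (isChildOf_isSubtreeOf hvchild) hu
        have hveq : v = Vtree.node l₂ r₂ := vars_inj hnd hvsub hsub₂ (by rw [← hscp, hsceq])
        have h1 := idxOf_lt_prodCount (C := C) hprod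
        rw [hscp, hveq] at h1
        exact lt_of_lt_of_le h1 (hbound (hveq ▸ hvsub))
      | leaf w f =>
        show (if s = 0 then (1:ℝ) else 0) = 0
        rw [if_neg (by omega)]
      | prod ch =>
        show (if s = 0 then (1:ℝ) else 0) = 0
        rw [if_neg (by omega)]
  · -- leafCPT normalized
    intro i s'
    show ∑ a, leafB C (Vtree.node l₀ r₀) i a s' = 1
    have hcard : (0:ℝ) < (Fintype.card (Val i) : ℝ) := by
      exact_mod_cast Fintype.card_pos
    have huni : ∑ _a : Val i, (Fintype.card (Val i) : ℝ)⁻¹ = 1 := by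
      rw [Finset.sum_const, Finset.card_univ, nsmul_eq_mul]
      field_simp
    unfold leafB
    cases hsel : selNode C (Vtree.node l₀ r₀) (Vtree.leaf i) s' with
    | none =>
      simpa using huni
    | some c =>
      simp only [Option.map_some, Option.getD_some]
      have wit := selNode_spec hsel
      obtain ⟨t', u, hu, hvchild, hp', hs', hi', hcm, hscc⟩ := wit
      obtain ⟨ch', hch'⟩ := isProdB_iff.1 hp'
      have hnp : (C.node c).isProdB = false :=
        halt.2 t' ch' hch' c (by rwa [children_prod hch'] at hcm)
      have hscl : C.scope c = {i} := by rw [hscc]; rfl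
      obtain ⟨f, hf⟩ := child_classify_leaf hWF hsm hns halt hstr hnd hnp hscl
      calc ∑ a, leafW C i a c = ∑ a, f a :=
            Finset.sum_congr rfl (fun a _ => leafW_leaf hf a)
        _ = 1 := hnl c i f hf
  · -- the evaluation identity
    intro x
    show PSsum st (Vtree.node l₀ r₀).innerFinset (fun z => B.joint (Vtree.node l₀ r₀) x z)
      = C.eval x
    rw [heval x]
    have hJr : ∀ z : Vtree (Fin n) → ℕ, B.joint (Vtree.node l₀ r₀) x z
        = B.rootDist (z (Vtree.node l₀ r₀)) * B.jointAux x z l₀ (z (Vtree.node l₀ r₀))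
          * B.jointAux x z r₀ (z (Vtree.node l₀ r₀)) := fun z => rfl
    rw [PSsum_congr st (Vtree.node l₀ r₀).innerFinset hJr]
    rw [PSstep x l₀ r₀ (Vtree.IsSubtreeOf.refl _) (fun b => B.rootDist b)]
    cases hr : C.node i₀ with
    | leaf w f => exact (hrootnotleaf hr).elim
    | sum ch =>
      have hstep : ∀ b ∈ Finset.range st, B.rootDist b
            * (PSsum st l₀.innerFinset (fun z => B.jointAux x z l₀ b)
              * PSsum st r₀.innerFinset (fun z => B.jointAux x z r₀ b))
          = Wsum C ch b
            * (PSsum st l₀.innerFinset (fun z => B.jointAux x z l₀ b)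
              * PSsum st r₀.innerFinset (fun z => B.jointAux x z r₀ b)) := by
        intro b _
        have : B.rootDist b = Wsum C ch b := rootB_sum hr b
        rw [this]
      rw [Finset.sum_congr rfl hstep]
      exact sumstep x l₀ r₀ (Vtree.IsSubtreeOf.refl _) i₀ ch hr hsc₀'
        (fun s' d hw => main x l₀ (isSubtreeOf_trans (Vtree.IsSubtreeOf.left
          (Vtree.IsSubtreeOf.refl l₀)) (Vtree.IsSubtreeOf.refl _)) s' d hw)
        (fun s' d hw => main x r₀ (isSubtreeOf_trans (Vtree.IsSubtreeOf.right
          (Vtree.IsSubtreeOf.refl r₀)) (Vtree.IsSubtreeOf.refl _)) s' d hw)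
    | prod ch =>
      have hprod : (C.node i₀).isProdB = true := by rw [hr]; rfl
      obtain ⟨d₁, d₂, hdch, hd₁, hd₂⟩ := hchildprod (Vtree.IsSubtreeOf.refl _) hprod hsc₀'
      have hidx₀ : C.idxOf i₀ < st := by
        have h1 := idxOf_lt_prodCount (C := C) hprod
        rw [hsc₀'] at h1
        exact lt_of_lt_of_le h1 (hbound (Vtree.IsSubtreeOf.refl _))
      have hstep : ∀ b ∈ Finset.range st, B.rootDist b
            * (PSsum st l₀.innerFinset (fun z => B.jointAux x z l₀ b)
              * PSsum st r₀.innerFinset (fun z => B.jointAux x z r₀ b))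
          = if C.idxOf i₀ = b then
              (PSsum st l₀.innerFinset (fun z => B.jointAux x z l₀ b)
                * PSsum st r₀.innerFinset (fun z => B.jointAux x z r₀ b)) else 0 := by
        intro b _
        have h2 : B.rootDist b = if C.idxOf i₀ = b then 1 else 0 := rootB_prod hr b
        rw [h2, ite_mul, one_mul, zero_mul]
      rw [Finset.sum_congr rfl hstep]
      rw [Finset.sum_ite_eq (Finset.range st) (C.idxOf i₀)
        (fun b => PSsum st l₀.innerFinset (fun z => B.jointAux x z l₀ b)
          * PSsum st r₀.innerFinset (fun z => B.jointAux x z r₀ b))]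
      rw [if_pos (Finset.mem_range.2 hidx₀)]
      have wit₁ : transWit C (Vtree.node l₀ r₀) l₀ (C.idxOf i₀) d₁ :=
        ⟨i₀, Vtree.node l₀ r₀, Vtree.IsSubtreeOf.refl _, Or.inl rfl, hprod, hsc₀', rfl,
          by rw [hdch]; simp, hd₁⟩
      have wit₂ : transWit C (Vtree.node l₀ r₀) r₀ (C.idxOf i₀) d₂ :=
        ⟨i₀, Vtree.node l₀ r₀, Vtree.IsSubtreeOf.refl _, Or.inr rfl, hprod, hsc₀', rfl,
          by rw [hdch]; simp, hd₂⟩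
      rw [main x l₀ (isSubtreeOf_trans (Vtree.IsSubtreeOf.left (Vtree.IsSubtreeOf.refl l₀))
        (Vtree.IsSubtreeOf.refl _)) (C.idxOf i₀) d₁ wit₁]
      rw [main x r₀ (isSubtreeOf_trans (Vtree.IsSubtreeOf.right (Vtree.IsSubtreeOf.refl r₀))
        (Vtree.IsSubtreeOf.refl _)) (C.idxOf i₀) d₂ wit₂]
      have hche : ch = [d₁, d₂] := by rw [← children_prod hr, hdch]
      rw [nodeEval_prod hWF x hr, hche]
      simp
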